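/- arXiv:1804.05752 — 6 statements merged into one kernel-verified Lean document; each statement's English description precedes it below -/
import Mathlib

section
/- Let W : Δ(X) → ℝ be continuous and μ ∈ Δ(X). Then the supremum of E_P[W] over all P ∈ Δ²(X) with barycenter E_P[ν] = μ is attained, and it is attained by some P that is a convex combination of at most |X| Dirac measures on Δ(X). -/
open MeasureTheory Topology Filter

noncomputable section

/-- Expected value `E_P[W] = ∫ W(ν) dP(ν)` of a function `W : Δ(X) → ℝ`
under a Borel probability measure `P ∈ Δ²(X)` on the simplex `Δ(X)`. -/
def expct {X : Type*} [Fintype X] (P : ProbabilityMeasure (stdSimplex ℝ X))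
    (W : stdSimplex ℝ X → ℝ) : ℝ :=
  ∫ ν, W ν ∂(P : Measure (stdSimplex ℝ X))

/-- `P ∈ Δ²(X)` has barycenter `E_P[ν] = μ`. -/
def isBary {X : Type*} [Fintype X] (P : ProbabilityMeasure (stdSimplex ℝ X))
    (μ : stdSimplex ℝ X) : Prop :=
  ∀ x : X, expct P (fun ν => (ν : X → ℝ) x) = (μ : X → ℝ) x

/-- `P ∈ Δ²(X)` has support of size at most `m`: it is a convex combination of at
most `m` Dirac measures on `Δ(X)`. -/
def finSupp {X : Type*} [Fintype X] (P : ProbabilityMeasure (stdSimplex ℝ X)) (m : ℕ) : Prop :=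
  ∃ (p : Fin m → ℝ) (ν : Fin m → stdSimplex ℝ X),
    (∀ j, 0 ≤ p j) ∧ (∑ j, p j = 1) ∧
    (P : Measure (stdSimplex ℝ X)) = ∑ j, ENNReal.ofReal (p j) • Measure.dirac (ν j)

/-- The information possibility set
`𝒱(μ) = {(E_P[V^1], …, E_P[V^n]) : P ∈ Δ²(X), E_P[ν] = μ} ⊆ ℝ^n`. -/
def VSet {X : Type*} [Fintype X] {n : ℕ} (V : Fin n → stdSimplex ℝ X → ℝ)
    (μ : stdSimplex ℝ X) : Set (Fin n → ℝ) :=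
  {v | ∃ P : ProbabilityMeasure (stdSimplex ℝ X), isBary P μ ∧ ∀ i, expct P (V i) = v i}

def padw {k n : ℕ} (p : Fin k → ℝ) : Fin n → ℝ :=
  fun i => if hi : (i : ℕ) < k then p ⟨i, hi⟩ else 0

def padv {k n : ℕ} {α : Type*} (ν : Fin k → α) (a : α) : Fin n → α :=
  fun i => if hi : (i : ℕ) < k then ν ⟨i, hi⟩ else a

lemma pad_sum {k n : ℕ} (h : k ≤ n) (p : Fin k → ℝ) {α : Type*} (ν : Fin k → α) (a : α)
    {M : Type*} [AddCommMonoid M] (F : ℝ → α → M) (hF : ∀ b, F 0 b = 0) :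
    ∑ i : Fin n, F (padw p i) (padv ν a i) = ∑ j : Fin k, F (p j) (ν j) := by
  rw [← Finset.sum_subset (Finset.subset_univ ((Finset.univ : Finset (Fin k)).map (Fin.castLEEmb h)))]
  · rw [Finset.sum_map]
    apply Finset.sum_congr rfl
    intro j _
    have hj : ((Fin.castLEEmb h j : Fin n) : ℕ) < k := j.2
    simp only [padw, padv, dif_pos hj]
    congr 1
  · intro i _ hi
    have : ¬ ((i : ℕ) < k) := by
      intro hik
      exact hi (Finset.mem_map.mpr ⟨⟨(i : ℕ), hik⟩, Finset.mem_univ _, by ext; simp⟩)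
    simp [padw, padv, dif_neg this, hF]

/-- Reduction lemma: any finite convex combination representing `μ` can be replaced by one
with at most `Fintype.card X` points and at least the same value. -/
lemma reduce {X : Type*} [Fintype X] [Nonempty X] (W : stdSimplex ℝ X → ℝ) (μ : stdSimplex ℝ X) :
    ∀ (k : ℕ) (p : Fin k → ℝ) (ν : Fin k → stdSimplex ℝ X),
    (∀ j, 0 ≤ p j) → (∑ j, p j = 1) →
    (∀ x, ∑ j, p j * (ν j : X → ℝ) x = (μ : X → ℝ) x) →
    ∃ (q : Fin (Fintype.card X) → ℝ) (w : Fin (Fintype.card X) → stdSimplex ℝ X),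
      (∀ j, 0 ≤ q j) ∧ (∑ j, q j = 1) ∧
      (∀ x, ∑ j, q j * (w j : X → ℝ) x = (μ : X → ℝ) x) ∧
      ∑ j, p j * W (ν j) ≤ ∑ j, q j * W (w j) := by
  intro k
  induction k using Nat.strong_induction_on with
  | _ k IH =>
  intro p ν hp0 hp1 hpb
  set n := Fintype.card X with hn
  rcases le_or_gt k n with hkn | hnk
  · -- pad
    refine ⟨padw p, padv ν μ, ?_, ?_, ?_, le_of_eq ?_⟩
    · intro j
      simp only [padw]
      split
      · exact hp0 _
      · exact le_refl 0
    · have := pad_sum hkn p ν μ (fun c (_ : stdSimplex ℝ X) => c) (fun _ => rfl)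
      rw [this, hp1]
    · intro x
      have := pad_sum hkn p ν μ (fun c b => c * (b : X → ℝ) x) (fun b => zero_mul _)
      rw [this, hpb x]
    · exact (pad_sum hkn p ν μ (fun c b => c * W b) (fun b => zero_mul _)).symm
  · -- k > n : reduce by one
    obtain ⟨m, rfl⟩ : ∃ m, k = m + 1 := Nat.exists_eq_succ_of_ne_zero (by omega)
    -- it suffices to find a combination with a zero weight and at least the same value
    suffices h : ∃ q : Fin (m + 1) → ℝ, (∀ j, 0 ≤ q j) ∧ (∑ j, q j = 1) ∧
        (∀ x, ∑ j, q j * (ν j : X → ℝ) x = (μ : X → ℝ) x) ∧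
        (∑ j, p j * W (ν j) ≤ ∑ j, q j * W (ν j)) ∧ ∃ j0, q j0 = 0 by
      obtain ⟨q, hq0, hq1, hqb, hqv, j0, hj0⟩ := h
      have key : ∀ F : Fin (m+1) → ℝ, ∑ i : Fin m, q (j0.succAbove i) * F (j0.succAbove i)
          = ∑ j, q j * F j := by
        intro F
        rw [Fin.sum_univ_succAbove (fun j => q j * F j) j0, hj0, zero_mul, zero_add]
      obtain ⟨r, w, hr0, hr1, hrb, hrv⟩ := IH m (by omega) (q ∘ j0.succAbove) (ν ∘ j0.succAbove)
        (fun i => hq0 _)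
        (by
          have := key (fun _ => 1)
          simpa using this.trans (by simpa using hq1))
        (fun x => by
          have := key (fun j => (ν j : X → ℝ) x)
          simpa [Function.comp] using this.trans (hqb x))
      refine ⟨r, w, hr0, hr1, hrb, ?_⟩
      refine le_trans hqv (le_trans (le_of_eq ?_) hrv)
      exact (key (fun j => W (ν j))).symm
    -- find such a combination
    by_cases hz : ∃ j0, p j0 = 0
    · exact ⟨p, hp0, hp1, hpb, le_refl _, hz⟩
    push_neg at hz
    have hppos : ∀ j, 0 < p j := fun j => lt_of_le_of_ne (hp0 j) (Ne.symm (hz j))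
    -- linear dependence
    have hdep : ¬ LinearIndependent ℝ (fun j : Fin (m+1) => ((ν j : X → ℝ))) := by
      intro hli
      have := hli.fintype_card_le_finrank
      rw [Module.finrank_pi] at this
      simp only [Fintype.card_fin] at this
      omega
    obtain ⟨c, hc, jne, hjne⟩ := Fintype.not_linearIndependent_iff.mp hdep
    have hcx : ∀ x, ∑ j, c j * (ν j : X → ℝ) x = 0 := by
      intro x
      have := congrFun hc x
      simpa [Finset.sum_apply] using this
    have hcs : ∑ j, c j = 0 := by
      have : ∑ j, c j = ∑ j, c j * (∑ x, (ν j : X → ℝ) x) := by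
        apply Finset.sum_congr rfl
        intro j _
        rw [show ∑ x, (ν j : X → ℝ) x = 1 from (ν j).2.2, mul_one]
      rw [this]
      simp_rw [Finset.mul_sum]
      rw [Finset.sum_comm]
      simp [hcx]
    -- WLOG the value direction is nonnegative, and get a strictly negative coefficient
    obtain ⟨d, hdx, hds, hdW, hdneg⟩ :
        ∃ d : Fin (m+1) → ℝ, (∀ x, ∑ j, d j * (ν j : X → ℝ) x = 0) ∧ (∑ j, d j = 0) ∧
          (0 ≤ ∑ j, d j * W (ν j)) ∧ ∃ j, d j < 0 := by
      have hex : ∀ d : Fin (m+1) → ℝ, (∑ j, d j = 0) → (∃ j, d j ≠ 0) → ∃ j, d j < 0 := by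
        intro d hsum ⟨j1, hj1⟩
        by_contra hall
        push_neg at hall
        have : ∀ j ∈ Finset.univ, d j = 0 :=
          (Finset.sum_eq_zero_iff_of_nonneg (fun j _ => hall j)).mp hsum
        exact hj1 (this j1 (Finset.mem_univ _))
      rcases le_or_gt 0 (∑ j, c j * W (ν j)) with hge | hlt
      · exact ⟨c, hcx, hcs, hge, hex c hcs ⟨jne, hjne⟩⟩
      · refine ⟨-c, ?_, ?_, ?_, hex (-c) ?_ ⟨jne, by simpa using hjne⟩⟩
        · intro x
          simp only [Pi.neg_apply, neg_mul, Finset.sum_neg_distrib, hcx x, neg_zero]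
        · simp [Finset.sum_neg_distrib, hcs]
        · simp only [Pi.neg_apply, neg_mul, Finset.sum_neg_distrib]
          linarith
        · simp [Finset.sum_neg_distrib, hcs]
    -- line search
    obtain ⟨jn, hjn⟩ := hdneg
    have hTne : jn ∈ Finset.univ.filter (fun j => d j < 0) := by
      simp [hjn]
    obtain ⟨j0, hj0T, hmin⟩ := Finset.exists_min_image (Finset.univ.filter (fun j => d j < 0))
      (fun j => p j / (-(d j))) ⟨jn, hTne⟩
    have hdj0 : d j0 < 0 := (Finset.mem_filter.mp hj0T).2
    set t := p j0 / (-(d j0)) with ht_def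
    have ht : 0 < t := div_pos (hppos j0) (by linarith)
    refine ⟨fun j => p j + t * d j, ?_, ?_, ?_, ?_, ⟨j0, ?_⟩⟩
    · intro j
      show 0 ≤ p j + t * d j
      by_cases hdj : d j < 0
      · have h1 : t ≤ p j / (-(d j)) := hmin j (Finset.mem_filter.mpr ⟨Finset.mem_univ _, hdj⟩)
        have h2 : t * (-(d j)) ≤ p j := (le_div_iff₀ (by linarith)).mp h1
        nlinarith
      · push_neg at hdj
        have : 0 ≤ t * d j := mul_nonneg ht.le hdj
        linarith [hp0 j]
    · rw [Finset.sum_add_distrib, hp1, ← Finset.mul_sum, hds, mul_zero, add_zero]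
    · intro x
      have : ∑ j, (p j + t * d j) * (ν j : X → ℝ) x
          = ∑ j, p j * (ν j : X → ℝ) x + t * ∑ j, d j * (ν j : X → ℝ) x := by
        rw [Finset.mul_sum, ← Finset.sum_add_distrib]
        apply Finset.sum_congr rfl
        intro j _; ring
      rw [this, hpb x, hdx x, mul_zero, add_zero]
    · have : ∑ j, (p j + t * d j) * W (ν j)
          = ∑ j, p j * W (ν j) + t * ∑ j, d j * W (ν j) := by
        rw [Finset.mul_sum, ← Finset.sum_add_distrib]
        apply Finset.sum_congr rfl
        intro j _; ring
      rw [this]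
      nlinarith
    · have hne : -(d j0) ≠ 0 := by linarith
      have h5 : t * (-(d j0)) = p j0 := div_mul_cancel₀ _ hne
      linarith

/-- In a finite-dimensional normed space, the convex hull of a nonempty compact set is compact. -/
lemma isCompact_convexHull_of_isCompact {E : Type*} [NormedAddCommGroup E] [NormedSpace ℝ E]
    [FiniteDimensional ℝ E] {s : Set E} (hs : IsCompact s) (hne : s.Nonempty) :
    IsCompact (convexHull ℝ s) := by
  classical
  set d := Module.finrank ℝ E + 1 with hd
  obtain ⟨a, ha⟩ := hne
  have himage : convexHull ℝ s =
      (fun pz : (Fin d → ℝ) × (Fin d → E) => ∑ j, pz.1 j • pz.2 j) ''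
        ((stdSimplex ℝ (Fin d)) ×ˢ (Set.univ.pi fun _ : Fin d => s)) := by
    apply Set.Subset.antisymm
    · intro x hx
      obtain ⟨ι, hι, z, w, hzs, hai, hw0, hw1, hwz⟩ := eq_pos_convex_span_of_mem_convexHull hx
      have hk : Fintype.card ι ≤ d := by
        have h1 := hai.card_le_finrank_succ
        have h2 : Module.finrank ℝ (vectorSpan ℝ (Set.range z)) ≤ Module.finrank ℝ E :=
          Submodule.finrank_le _
        omega
      set k := Fintype.card ι with hkdef
      have e : Fin k ≃ ι := (Fintype.equivFin ι).symm
      refine ⟨(padw (w ∘ e), padv (z ∘ e) a), ⟨⟨fun j => ?_, ?_⟩, fun j _ => ?_⟩, ?_⟩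
      · simp only [padw]
        split
        · exact (hw0 _).le
        · exact le_refl 0
      · have h : ∑ i : Fin d, padw (w ∘ e) i = ∑ j : Fin k, w (e j) :=
          pad_sum hk (w ∘ e) (z ∘ e) a (fun c (_ : E) => c) (fun _ => rfl)
        exact h.trans ((Equiv.sum_comp e w).trans hw1)
      · simp only [padv]
        split
        · exact hzs (Set.mem_range_self _)
        · exact ha
      · have h : ∑ i : Fin d, padw (w ∘ e) i • padv (z ∘ e) a i = ∑ j : Fin k, w (e j) • z (e j) :=
          pad_sum hk (w ∘ e) (z ∘ e) a (fun (c : ℝ) (b : E) => c • b) (fun b => zero_smul ℝ b)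
        exact h.trans ((Equiv.sum_comp e (fun i => w i • z i)).trans hwz)
    · rintro x ⟨⟨p, zf⟩, ⟨hp, hzf⟩, rfl⟩
      have h1 : ∑ j, p j = 1 := hp.2
      have := Finset.centerMass_mem_convexHull (Finset.univ : Finset (Fin d))
        (fun i _ => hp.1 i) (by rw [h1]; exact one_pos) (fun i _ => hzf i (Set.mem_univ i))
      rwa [Finset.centerMass_eq_of_sum_1 _ _ h1] at this
  rw [himage]
  exact ((isCompact_stdSimplex ℝ _).prod (isCompact_univ_pi fun _ => hs)).image
    (continuous_finset_sum _ fun j _ =>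
      ((continuous_apply j).comp continuous_fst).smul ((continuous_apply j).comp continuous_snd))

instance stdSimplexCompact {X : Type*} [Fintype X] : CompactSpace (stdSimplex ℝ X) :=
  isCompact_iff_compactSpace.mp (isCompact_stdSimplex ℝ X)

lemma cont_integrable {X : Type*} [Fintype X] {f : stdSimplex ℝ X → ℝ} (hf : Continuous f)
    (μm : Measure (stdSimplex ℝ X)) [IsFiniteMeasure μm] : Integrable f μm :=
  hf.integrable_of_hasCompactSupport (IsCompact.of_isClosed_subset isCompact_univ
    (isClosed_tsupport f) (Set.subset_univ _))

lemma integral_dirac_sum {X : Type*} [Fintype X] {n : ℕ} (p : Fin n → ℝ) (hp : ∀ j, 0 ≤ p j)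
    (w : Fin n → stdSimplex ℝ X) (g : stdSimplex ℝ X → ℝ) (hg : Continuous g) :
    ∫ ν, g ν ∂(∑ j, ENNReal.ofReal (p j) • Measure.dirac (w j)) = ∑ j, p j * g (w j) := by
  rw [MeasureTheory.integral_finset_sum_measure
    (fun j _ => (cont_integrable hg _).smul_measure ENNReal.ofReal_ne_top)]
  apply Finset.sum_congr rfl
  intro j _
  rw [integral_smul_measure, integral_dirac, ENNReal.toReal_ofReal (hp j), smul_eq_mul]

lemma Qbound {X : Type*} [Fintype X] [Nonempty X] {W : stdSimplex ℝ X → ℝ} (hW : Continuous W)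
    {μ : stdSimplex ℝ X} {M : ℝ}
    (hM : ((μ : X → ℝ), M) ∈
      convexHull ℝ ((fun ν : stdSimplex ℝ X => ((ν : X → ℝ), W ν)) '' Set.univ))
    (hcombo : ∀ (k : ℕ) (p : Fin k → ℝ) (ν : Fin k → stdSimplex ℝ X),
      (∀ j, 0 ≤ p j) → (∑ j, p j = 1) →
      (∀ x, ∑ j, p j * (ν j : X → ℝ) x = (μ : X → ℝ) x) →
      ∑ j, p j * W (ν j) ≤ M)
    (Q : ProbabilityMeasure (stdSimplex ℝ X)) (hQ : isBary Q μ) : expct Q W ≤ M := by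
  classical
  set G : Set ((X → ℝ) × ℝ) := (fun ν : stdSimplex ℝ X => ((ν : X → ℝ), W ν)) '' Set.univ with hG
  have hGc : IsCompact G := isCompact_univ.image (continuous_subtype_val.prodMk hW)
  have hGne : G.Nonempty := ⟨_, Set.mem_image_of_mem _ (Set.mem_univ μ)⟩
  have hKc : IsCompact (convexHull ℝ G) := isCompact_convexHull_of_isCompact hGc hGne
  suffices key : ∀ ε : ℝ, 0 < ε → expct Q W ≤ M + ε by
    by_contra hcon
    push_neg at hcon
    have := key ((expct Q W - M) / 2) (by linarith)
    linarith
  intro ε hε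
  -- the point `(μ, M + ε)` is not in the convex hull of the graph of `W`
  have hzK : ((μ : X → ℝ), M + ε) ∉ convexHull ℝ G := by
    intro hmem
    rw [_root_.convexHull_eq] at hmem
    obtain ⟨ι, t, wt, zf, hw0, hw1, hzG, hcm⟩ := hmem
    rw [Finset.centerMass_eq_of_sum_1 _ _ hw1] at hcm
    have hch : ∀ i, ∃ νi : stdSimplex ℝ X, i ∈ t → ((νi : X → ℝ), W νi) = zf i := by
      intro i
      by_cases hi : i ∈ t
      · obtain ⟨νi, -, hνi⟩ := hzG i hi
        exact ⟨νi, fun _ => hνi⟩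
      · exact ⟨μ, fun h => absurd h hi⟩
    choose νf hνf using hch
    set k := t.card with hk
    have e : Fin k ≃ {i // i ∈ t} := t.equivFin.symm
    have hsum : ∀ F : ι → ℝ, ∑ j : Fin k, F (e j) = ∑ i ∈ t, F i := by
      intro F
      rw [← Finset.sum_coe_sort t F]
      exact Equiv.sum_comp e (fun i : {i // i ∈ t} => F i)
    have hfst : ∀ x, ∑ i ∈ t, wt i * (νf i : X → ℝ) x = (μ : X → ℝ) x := by
      intro x
      have h1 : ∑ i ∈ t, wt i • (νf i : X → ℝ) = (μ : X → ℝ) := by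
        have h2 : ∑ i ∈ t, wt i • (νf i : X → ℝ) = (∑ i ∈ t, wt i • zf i).1 := by
          rw [Prod.fst_sum]
          apply Finset.sum_congr rfl
          intro i hi
          rw [← hνf i hi]
          rfl
        rw [h2, hcm]
      have := congrFun h1 x
      simpa [Finset.sum_apply] using this
    have hsnd : ∑ i ∈ t, wt i * W (νf i) = M + ε := by
      have h2 : ∑ i ∈ t, wt i * W (νf i) = (∑ i ∈ t, wt i • zf i).2 := by
        rw [Prod.snd_sum]
        apply Finset.sum_congr rfl
        intro i hi
        rw [← hνf i hi]
        rfl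
      rw [h2, hcm]
    have hle := hcombo k (fun j => wt (e j)) (fun j => νf (e j))
      (fun j => hw0 _ (e j).2)
      ((hsum wt).trans hw1)
      (fun x => (hsum (fun i => wt i * (νf i : X → ℝ) x)).trans (hfst x))
    rw [hsum (fun i => wt i * W (νf i)), hsnd] at hle
    linarith
  obtain ⟨f, u, hfu, hux⟩ :=
    geometric_hahn_banach_closed_point (convex_convexHull ℝ G) hKc.isClosed hzK
  set β := f ((0 : X → ℝ), (1 : ℝ)) with hβdef
  have hdecomp : ∀ (η : X → ℝ) (r : ℝ), f (η, r) = f (η, 0) + r * β := by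
    intro η r
    have h : (η, r) = ((η, (0 : ℝ)) + r • ((0 : X → ℝ), (1 : ℝ))) := by
      ext <;> simp
    rw [h, map_add, _root_.map_smul, smul_eq_mul]
  have hβpos : 0 < β := by
    have h1 : f ((μ : X → ℝ), M) < u := hfu _ hM
    have h2 : u < f ((μ : X → ℝ), M + ε) := hux
    have h3 := hdecomp (μ : X → ℝ) M
    have h4 := hdecomp (μ : X → ℝ) (M + ε)
    nlinarith
  have hWle : ∀ ν : stdSimplex ℝ X, W ν ≤ (u - f ((ν : X → ℝ), 0)) / β := by
    intro ν
    have h1 : f ((ν : X → ℝ), W ν) < u :=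
      hfu _ (subset_convexHull ℝ G ⟨ν, Set.mem_univ _, rfl⟩)
    rw [hdecomp] at h1
    rw [le_div_iff₀ hβpos]
    linarith
  have hrep : ∀ ν : stdSimplex ℝ X,
      f ((ν : X → ℝ), 0) = ∑ x, (ν : X → ℝ) x * f (Pi.single x 1, 0) := by
    intro ν
    have hsum : ((ν : X → ℝ), (0 : ℝ))
        = ∑ x, (ν : X → ℝ) x • ((Pi.single x (1 : ℝ) : X → ℝ), (0 : ℝ)) := by
      rw [Prod.ext_iff]
      constructor
      · rw [Prod.fst_sum]
        funext y
        simp only [Prod.smul_fst, Finset.sum_apply, Pi.smul_apply, Pi.single_apply,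
          smul_eq_mul, mul_ite, mul_one, mul_zero]
        simp [Finset.sum_ite_eq']
      · rw [Prod.snd_sum]
        simp
    rw [hsum, map_sum]
    apply Finset.sum_congr rfl
    intro x _
    rw [_root_.map_smul, smul_eq_mul]
  have hfcont : Continuous (fun ν : stdSimplex ℝ X => f ((ν : X → ℝ), (0 : ℝ))) :=
    f.continuous.comp (continuous_subtype_val.prodMk continuous_const)
  set Qm := (Q : Measure (stdSimplex ℝ X)) with hQm
  have : IsProbabilityMeasure Qm := Q.prop
  have hintx : ∀ x : X, Integrable
      (fun ν : stdSimplex ℝ X => (ν : X → ℝ) x * f (Pi.single x 1, 0)) Qm := fun x =>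
    cont_integrable (((continuous_apply x).comp continuous_subtype_val).mul continuous_const) _
  have hIf : ∫ ν, f ((ν : X → ℝ), (0 : ℝ)) ∂Qm = f ((μ : X → ℝ), 0) := by
    rw [integral_congr_ae (Filter.Eventually.of_forall hrep)]
    rw [integral_finset_sum _ (fun x _ => hintx x)]
    rw [hrep μ]
    apply Finset.sum_congr rfl
    intro x _
    rw [integral_mul_const]
    have hb : ∫ ν, (ν : X → ℝ) x ∂Qm = (μ : X → ℝ) x := hQ x
    rw [hb]
  have hint1 : Integrable W Qm := cont_integrable hW _
  have hint2 : Integrable (fun ν : stdSimplex ℝ X => (u - f ((ν : X → ℝ), 0)) / β) Qm :=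
    cont_integrable ((continuous_const.sub hfcont).div_const β) _
  have hmono : expct Q W ≤ ∫ ν, (u - f ((ν : X → ℝ), 0)) / β ∂Qm :=
    integral_mono hint1 hint2 hWle
  have hcalc : ∫ ν, (u - f ((ν : X → ℝ), 0)) / β ∂Qm = (u - f ((μ : X → ℝ), 0)) / β := by
    rw [integral_div, integral_sub (integrable_const u) (cont_integrable hfcont _), hIf,
      integral_const]
    simp [measure_univ]
  have hfinal : (u - f ((μ : X → ℝ), 0)) / β ≤ M + ε := by
    have h2 : u < f ((μ : X → ℝ), M + ε) := hux
    rw [hdecomp] at h2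
    rw [div_le_iff₀ hβpos]
    linarith
  calc expct Q W ≤ _ := hmono
    _ = _ := hcalc
    _ ≤ M + ε := hfinal

/-- For continuous `W : Δ(X) → ℝ` and `μ ∈ Δ(X)`, the supremum of `E_P[W]`
over all `P ∈ Δ²(X)` with barycenter `μ` is attained by some `P` which is a convex
combination of at most `|X|` Dirac measures. -/
theorem statement_2 {X : Type*} [Fintype X] [Nonempty X]
    (W : stdSimplex ℝ X → ℝ) (hW : Continuous W) (μ : stdSimplex ℝ X) :
    ∃ P : ProbabilityMeasure (stdSimplex ℝ X),
      isBary P μ ∧ finSupp P (Fintype.card X) ∧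
      ∀ Q : ProbabilityMeasure (stdSimplex ℝ X), isBary Q μ → expct Q W ≤ expct P W := by
  classical
  set n := Fintype.card X with hn
  -- the feasible set for `n`-point combinations
  set D : Set ((Fin n → ℝ) × (Fin n → stdSimplex ℝ X)) :=
    {pq | (∀ j, 0 ≤ pq.1 j) ∧ (∑ j, pq.1 j = 1) ∧
      (∀ x, ∑ j, pq.1 j * (pq.2 j : X → ℝ) x = (μ : X → ℝ) x)} with hD
  have hn0 : 0 < n := Fintype.card_pos
  have hDne : D.Nonempty := by
    refine ⟨(fun j => if j = ⟨0, hn0⟩ then 1 else 0, fun _ => μ), ?_, ?_, ?_⟩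
    · intro j; dsimp only; split <;> norm_num
    · rw [Finset.sum_eq_single ⟨0, hn0⟩]
      · simp
      · intro b _ hb; exact if_neg hb
      · simp
    · intro x
      simp only
      rw [← Finset.sum_mul]
      rw [Finset.sum_eq_single ⟨0, hn0⟩]
      · simp
      · intro b _ hb; exact if_neg hb
      · simp
  have hDclosed : IsClosed D := by
    have h1 : IsClosed {pq : (Fin n → ℝ) × (Fin n → stdSimplex ℝ X) | ∀ j, 0 ≤ pq.1 j} := by
      rw [Set.setOf_forall]
      exact isClosed_iInter fun j =>
        isClosed_le continuous_const ((continuous_apply j).comp continuous_fst)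
    have h2 : IsClosed {pq : (Fin n → ℝ) × (Fin n → stdSimplex ℝ X) | ∑ j, pq.1 j = 1} :=
      isClosed_eq (continuous_finset_sum _ fun j _ =>
        (continuous_apply j).comp continuous_fst) continuous_const
    have h3 : IsClosed {pq : (Fin n → ℝ) × (Fin n → stdSimplex ℝ X) |
        ∀ x, ∑ j, pq.1 j * (pq.2 j : X → ℝ) x = (μ : X → ℝ) x} := by
      rw [Set.setOf_forall]
      refine isClosed_iInter fun x => isClosed_eq ?_ continuous_const
      refine continuous_finset_sum _ fun j _ => ?_
      exact ((continuous_apply j).comp continuous_fst).mul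
        ((continuous_apply x).comp (continuous_subtype_val.comp
          ((continuous_apply j).comp continuous_snd)))
    have : D = _ ∩ (_ ∩ _) := rfl
    exact h1.inter (h2.inter h3)
  have hDcompact : IsCompact D := by
    refine IsCompact.of_isClosed_subset ((isCompact_stdSimplex ℝ (Fin n)).prod isCompact_univ)
      hDclosed ?_
    rintro ⟨p, w⟩ ⟨hp0, hp1, _⟩
    exact ⟨⟨hp0, hp1⟩, Set.mem_univ _⟩
  have hgcont : Continuous (fun pq : (Fin n → ℝ) × (Fin n → stdSimplex ℝ X) =>
      ∑ j, pq.1 j * W (pq.2 j)) := by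
    refine continuous_finset_sum _ fun j _ => ?_
    exact ((continuous_apply j).comp continuous_fst).mul
      (hW.comp ((continuous_apply j).comp continuous_snd))
  obtain ⟨⟨ps, vs⟩, hmemD, hmax⟩ := hDcompact.exists_isMaxOn hDne hgcont.continuousOn
  rw [isMaxOn_iff] at hmax
  obtain ⟨hps0, hps1, hpsb⟩ := hmemD
  set M := ∑ j, ps j * W (vs j) with hMdef
  set Pm : Measure (stdSimplex ℝ X) := ∑ j, ENNReal.ofReal (ps j) • Measure.dirac (vs j) with hPm
  have hPprob : IsProbabilityMeasure Pm := by
    constructor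
    rw [hPm, Measure.finset_sum_apply]
    simp only [Measure.smul_apply, Measure.dirac_apply_of_mem (Set.mem_univ _), smul_eq_mul,
      mul_one]
    rw [← ENNReal.ofReal_sum_of_nonneg (fun j _ => hps0 j), hps1, ENNReal.ofReal_one]
  set P : ProbabilityMeasure (stdSimplex ℝ X) := ⟨Pm, hPprob⟩ with hP
  have hPcoe : (P : Measure (stdSimplex ℝ X)) = Pm := rfl
  have hPexp : ∀ g : stdSimplex ℝ X → ℝ, Continuous g → expct P g = ∑ j, ps j * g (vs j) := by
    intro g hg
    show ∫ ν, g ν ∂Pm = _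
    rw [hPm]
    exact integral_dirac_sum ps hps0 vs g hg
  have hPbary : isBary P μ := by
    intro x
    exact (hPexp (fun ν => (ν : X → ℝ) x)
      ((continuous_apply x).comp continuous_subtype_val)).trans (hpsb x)
  have hcombo : ∀ (k : ℕ) (p : Fin k → ℝ) (ν : Fin k → stdSimplex ℝ X),
      (∀ j, 0 ≤ p j) → (∑ j, p j = 1) →
      (∀ x, ∑ j, p j * (ν j : X → ℝ) x = (μ : X → ℝ) x) →
      ∑ j, p j * W (ν j) ≤ M := by
    intro k p ν h0 h1 hb
    obtain ⟨q, w, hq0, hq1, hqb, hqv⟩ := reduce W μ k p ν h0 h1 hb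
    exact le_trans hqv (hmax (q, w) ⟨hq0, hq1, hqb⟩)
  have hMmem : ((μ : X → ℝ), M) ∈
      convexHull ℝ ((fun ν : stdSimplex ℝ X => ((ν : X → ℝ), W ν)) '' Set.univ) := by
    have hmem : Finset.univ.centerMass ps (fun j => ((vs j : X → ℝ), W (vs j))) ∈
        convexHull ℝ ((fun ν : stdSimplex ℝ X => ((ν : X → ℝ), W ν)) '' Set.univ) :=
      Finset.centerMass_mem_convexHull _ (fun j _ => hps0 j) (by rw [hps1]; exact one_pos)
        (fun j _ => Set.mem_image_of_mem _ (Set.mem_univ (vs j)))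
    rw [Finset.centerMass_eq_of_sum_1 _ _ hps1] at hmem
    have heq : ((μ : X → ℝ), M) = ∑ j, ps j • (((vs j : X → ℝ)), W (vs j)) := by
      rw [Prod.ext_iff]
      constructor
      · rw [Prod.fst_sum]
        funext x
        simp only [Prod.smul_fst, Finset.sum_apply, Pi.smul_apply, smul_eq_mul]
        exact (hpsb x).symm
      · rw [Prod.snd_sum]
        simp only [Prod.smul_snd, smul_eq_mul]
        exact hMdef
    rw [heq]
    exact hmem
  refine ⟨P, hPbary, ⟨ps, vs, hps0, hps1, hPcoe.trans hPm⟩, ?_⟩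
  intro Q hQ
  rw [hPexp W hW]
  exact Qbound hW hMmem hcombo Q hQ
end
end

section
/- For every μ ∈ Δ(X) and every extreme point v of 𝒱(μ), there exists P ∈ Δ²(X) with barycenter E_P[ν] = μ and support of size at most |X| such that v = (E_P[V^1], …, E_P[V^n]). -/
open MeasureTheory Topology Filter

noncomputable section

section Aux

open Module

theorem dsum {M : Type*} [AddCommMonoid M] {k m : ℕ} (h : k ≤ m) (f : Fin k → M) :
    ∑ j : Fin m, (if hj : (j:ℕ) < k then f ⟨j, hj⟩ else 0) = ∑ j, f j := by
  rw [Fin.sum_univ_eq_sum_range (fun j => if hj : j < k then f ⟨j, hj⟩ else 0) m,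
    ← Finset.sum_subset (Finset.range_subset_range.mpr h)
      (by intro x _ hx; rw [Finset.mem_range, not_lt] at hx; rw [dif_neg (by omega)]),
    ← Fin.sum_univ_eq_sum_range (fun j => if hj : j < k then f ⟨j, hj⟩ else 0) k]
  exact Finset.sum_congr rfl fun j _ => by rw [dif_pos j.2]

theorem myCompactHull {E : Type*} [NormedAddCommGroup E] [NormedSpace ℝ E]
    [FiniteDimensional ℝ E] {s : Set E} (hs : IsCompact s) :
    IsCompact (convexHull ℝ s) := by
  rcases s.eq_empty_or_nonempty with rfl | ⟨e, he⟩
  · simp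
  set m := finrank ℝ E + 1 with hm
  have hF : Continuous fun q : (Fin m → ℝ) × (Fin m → E) => ∑ j, q.1 j • q.2 j :=
    continuous_finset_sum _ fun j _ =>
      ((continuous_apply j).comp continuous_fst).smul ((continuous_apply j).comp continuous_snd)
  have hK : IsCompact ((stdSimplex ℝ (Fin m)) ×ˢ (Set.univ.pi fun _ : Fin m => s)) :=
    (isCompact_stdSimplex ℝ (Fin m)).prod (isCompact_univ_pi fun _ => hs)
  have himg : convexHull ℝ s =
      (fun q : (Fin m → ℝ) × (Fin m → E) => ∑ j, q.1 j • q.2 j) ''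
        ((stdSimplex ℝ (Fin m)) ×ˢ (Set.univ.pi fun _ : Fin m => s)) := by
    apply Set.Subset.antisymm
    · intro x hx
      obtain ⟨ι, hfin, z, w, hzs, hai, hw0, hw1, hwz⟩ := eq_pos_convex_span_of_mem_convexHull hx
      have hcard : @Fintype.card ι hfin ≤ m := by
        have h1 := @AffineIndependent.card_le_finrank_succ _ _ _ _ _ _ _ _ hfin _ hai
        have h2 := Submodule.finrank_le (vectorSpan ℝ (Set.range z))
        omega
      set k := @Fintype.card ι hfin with hk
      obtain ⟨eq⟩ : Nonempty (ι ≃ Fin k) := ⟨@Fintype.equivFin ι hfin⟩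
      refine ⟨(fun j : Fin m => if hj : (j:ℕ) < k then w (eq.symm ⟨j, hj⟩) else 0,
        fun j : Fin m => if hj : (j:ℕ) < k then z (eq.symm ⟨j, hj⟩) else e), ⟨⟨?_, ?_⟩, ?_⟩, ?_⟩
      · intro j; dsimp only; split
        · exact (hw0 _).le
        · exact le_refl _
      · dsimp only
        rw [dsum hcard fun j => w (eq.symm j)]
        rw [← hw1]; exact eq.symm.sum_comp w
      · intro j _; dsimp only; split
        · exact hzs (Set.mem_range_self _)
        · exact he
      · dsimp only
        have : ∀ j : Fin m,
            (if hj : (j:ℕ) < k then w (eq.symm ⟨j, hj⟩) else 0) •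
              (if hj : (j:ℕ) < k then z (eq.symm ⟨j, hj⟩) else e) =
            (if hj : (j:ℕ) < k then w (eq.symm ⟨j, hj⟩) • z (eq.symm ⟨j, hj⟩) else 0) := by
          intro j; split
          · rfl
          · exact zero_smul _ _
        rw [Finset.sum_congr rfl fun j _ => this j,
          dsum hcard fun j => w (eq.symm j) • z (eq.symm j)]
        rw [← hwz]; exact eq.symm.sum_comp fun i => w i • z i
    · rintro x ⟨⟨w, z⟩, ⟨hw, hz⟩, rfl⟩
      exact (convex_convexHull ℝ s).sum_mem (fun j _ => hw.1 j) hw.2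
        (fun j _ => subset_convexHull ℝ s (hz j (Set.mem_univ j)))
  rw [himg]
  exact hK.image hF

instance {X : Type*} [Fintype X] : CompactSpace (stdSimplex ℝ X) :=
  isCompact_iff_compactSpace.mp (isCompact_stdSimplex ℝ X)

theorem integrable_cont {X : Type*} [Fintype X] (Q : Measure (stdSimplex ℝ X)) [IsFiniteMeasure Q]
    {E : Type*} [NormedAddCommGroup E] {W : stdSimplex ℝ X → E} (hW : Continuous W) :
    Integrable W Q :=
  hW.integrable_of_hasCompactSupport
    (IsCompact.of_isClosed_subset isCompact_univ (isClosed_tsupport _) (Set.subset_univ _))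

theorem exists_pm {X : Type*} [Fintype X] {k : ℕ} (p : Fin k → ℝ) (ν : Fin k → stdSimplex ℝ X)
    (hp0 : ∀ j, 0 ≤ p j) (hp1 : ∑ j, p j = 1) :
    ∃ P : ProbabilityMeasure (stdSimplex ℝ X),
      (P : Measure (stdSimplex ℝ X)) = ∑ j, ENNReal.ofReal (p j) • Measure.dirac (ν j) ∧
      ∀ W : stdSimplex ℝ X → ℝ, Continuous W → expct P W = ∑ j, p j * W (ν j) := by
  set Q : Measure (stdSimplex ℝ X) := ∑ j, ENNReal.ofReal (p j) • Measure.dirac (ν j) with hQ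
  have hprob : IsProbabilityMeasure Q := by
    constructor
    rw [hQ]
    simp [Measure.finset_sum_apply, ← ENNReal.ofReal_sum_of_nonneg (fun j _ => hp0 j), hp1]
  refine ⟨⟨Q, hprob⟩, rfl, fun W hW => ?_⟩
  have hfin : ∀ j : Fin k, IsFiniteMeasure (ENNReal.ofReal (p j) • Measure.dirac (ν j)) := by
    intro j
    constructor
    simp [lt_top_iff_ne_top]
  show ∫ x, W x ∂Q = _
  rw [hQ, integral_finset_sum_measure (fun j _ => @integrable_cont _ _ _ (hfin j) _ _ _ hW)]
  congr 1
  funext j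
  rw [integral_smul_measure, integral_dirac, ENNReal.toReal_ofReal (hp0 j), smul_eq_mul]

/-- finitely supported representations of `(μ, v)` -/
def IRep {X : Type*} [Fintype X] {n : ℕ} (V : Fin n → stdSimplex ℝ X → ℝ)
    (μ : stdSimplex ℝ X) (v : Fin n → ℝ) (k : ℕ) : Prop :=
  ∃ (p : Fin k → ℝ) (ν : Fin k → stdSimplex ℝ X),
    (∀ j, 0 ≤ p j) ∧ (∑ j, p j = 1) ∧
    (∀ x : X, ∑ j, p j * (ν j : X → ℝ) x = (μ : X → ℝ) x) ∧
    (∀ i, ∑ j, p j * V i (ν j) = v i)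

variable {X : Type*} [Fintype X] {n : ℕ} {V : Fin n → stdSimplex ℝ X → ℝ}
    {μ : stdSimplex ℝ X} {v : Fin n → ℝ}

theorem rep_drop {m : ℕ} (p : Fin (m + 1) → ℝ) (ν : Fin (m + 1) → stdSimplex ℝ X)
    (hp0 : ∀ j, 0 ≤ p j) (hp1 : ∑ j, p j = 1)
    (hbary : ∀ x : X, ∑ j, p j * (ν j : X → ℝ) x = (μ : X → ℝ) x)
    (hval : ∀ i, ∑ j, p j * V i (ν j) = v i)
    (j0 : Fin (m + 1)) (hj0 : p j0 = 0) : IRep V μ v m := by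
  refine ⟨p ∘ j0.succAbove, ν ∘ j0.succAbove, fun j => hp0 _, ?_, fun x => ?_, fun i => ?_⟩
  · have := Fin.sum_univ_succAbove p j0
    rw [hj0, zero_add] at this
    exact this ▸ hp1
  · have := Fin.sum_univ_succAbove (fun j => p j * (ν j : X → ℝ) x) j0
    rw [hj0, zero_mul, zero_add] at this
    exact this ▸ hbary x
  · have := Fin.sum_univ_succAbove (fun j => p j * V i (ν j)) j0
    rw [hj0, zero_mul, zero_add] at this
    exact this ▸ hval i

theorem rep_pad {k m : ℕ} (h : IRep V μ v k) (hkm : k ≤ m) : IRep V μ v m := by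
  induction m with
  | zero => exact (Nat.le_zero.mp hkm) ▸ h
  | succ m ih =>
    rcases Nat.lt_or_ge k (m + 1) with hlt | hge
    · obtain ⟨p, ν, hp0, hp1, hbary, hval⟩ := ih (by omega)
      refine ⟨Fin.snoc p 0, Fin.snoc ν μ, ?_, ?_, fun x => ?_, fun i => ?_⟩
      · intro j
        induction j using Fin.lastCases with
        | last => simp
        | cast j => simp [hp0 j]
      · rw [Fin.sum_univ_castSucc]; simp [hp1]
      · rw [Fin.sum_univ_castSucc]; simp [hbary x]
      · rw [Fin.sum_univ_castSucc]; simp [hval i]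
    · exact (by omega : k = m + 1) ▸ h

theorem rep_of_hull
    (hmem : ((μ : X → ℝ), v) ∈ convexHull ℝ
      (Set.range fun ν : stdSimplex ℝ X => ((ν : X → ℝ), fun i => V i ν))) :
    ∃ k, IRep V μ v k := by
  rw [convexHull_eq] at hmem
  obtain ⟨ι, t, w, z, hw0, hw1, hz, hcm⟩ := hmem
  rw [Finset.centerMass_eq_of_sum_1 _ _ hw1] at hcm
  set e := t.equivFin with he
  choose ν hν using fun i (hi : i ∈ t) => hz i hi
  refine ⟨t.card, fun j => w (e.symm j), fun j => ν (e.symm j) (e.symm j).2,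
    fun j => hw0 _ (e.symm j).2, ?_, fun x => ?_, fun i => ?_⟩
  · rw [← hw1, ← Finset.sum_attach t w]
    exact Equiv.sum_comp e.symm (fun i : {x // x ∈ t} => w ↑i)
  · have hz' : ∀ j : Fin t.card, z (e.symm j) =
        (((ν (e.symm j) (e.symm j).2 : X → ℝ)), fun i => V i (ν (e.symm j) (e.symm j).2)) :=
      fun j => (hν _ _).symm
    have h1 := congrArg Prod.fst hcm
    rw [Prod.fst_sum] at h1
    have := congrFun h1 x
    rw [Finset.sum_apply] at this
    have hμx : ∑ c ∈ t, (w c • z c).1 x = (μ : X → ℝ) x := this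
    rw [← hμx, ← Finset.sum_attach t (fun i => (w i • z i).1 x), ← Finset.univ_eq_attach,
      ← Equiv.sum_comp e.symm (fun i : {x // x ∈ t} => (w ↑i • z ↑i).1 x)]
    refine Finset.sum_congr rfl fun j _ => ?_
    rw [hz' j]
    simp
  · have h2 := congrArg Prod.snd hcm
    rw [Prod.snd_sum] at h2
    have := congrFun h2 i
    rw [Finset.sum_apply] at this
    have hvi : ∑ c ∈ t, (w c • z c).2 i = v i := this
    rw [← hvi, ← Finset.sum_attach t (fun i' => (w i' • z i').2 i), ← Finset.univ_eq_attach,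
      ← Equiv.sum_comp e.symm (fun i' : {x // x ∈ t} => (w ↑i' • z ↑i').2 i)]
    refine Finset.sum_congr rfl fun j _ => ?_
    rw [(hν _ (e.symm j).2).symm]
    simp

theorem rep_mem_VSet (hV : ∀ i, Continuous (V i)) {v' : Fin n → ℝ} {k : ℕ}
    (h : IRep V μ v' k) : v' ∈ VSet V μ := by
  obtain ⟨p, ν, hp0, hp1, hbary, hval⟩ := h
  obtain ⟨P, _, hPint⟩ := exists_pm p ν hp0 hp1
  exact ⟨P, fun x => (hPint _ ((continuous_apply x).comp continuous_subtype_val)).trans (hbary x),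
    fun i => (hPint _ (hV i)).trans (hval i)⟩

theorem rep_descent (hV : ∀ i, Continuous (V i))
    (hv : v ∈ Set.extremePoints ℝ (VSet V μ)) (hex : ∃ k, IRep V μ v k) :
    ∃ k ≤ Fintype.card X, IRep V μ v k := by
  classical
  refine ⟨Nat.find hex, ?_, Nat.find_spec hex⟩
  by_contra hlt
  push_neg at hlt
  rcases hk0 : Nat.find hex with _ | m
  · omega
  have h0 : IRep V μ v (m + 1) := hk0 ▸ Nat.find_spec hex
  have hmin : ¬ IRep V μ v m := Nat.find_min hex (by omega)
  obtain ⟨p, ν, hp0, hp1, hbary, hval⟩ := h0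
  have hpos : ∀ j, 0 < p j := by
    intro j
    rcases (hp0 j).lt_or_eq with h | h
    · exact h
    · exact absurd (rep_drop p ν hp0 hp1 hbary hval j h.symm) hmin
  have nli : ¬ LinearIndependent ℝ (fun j : Fin (m+1) => ((ν j : X → ℝ))) := by
    intro h
    have := LinearIndependent.fintype_card_le_finrank h
    rw [Module.finrank_pi, Fintype.card_fin] at this
    omega
  obtain ⟨g, hg, j1, hj1⟩ := Fintype.not_linearIndependent_iff.mp nli
  have hgx : ∀ x : X, ∑ j, g j * (ν j : X → ℝ) x = 0 := by
    intro x
    have := congrFun hg x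
    rw [Finset.sum_apply] at this
    simpa using this
  have hgsum : ∑ j, g j = 0 := by
    have : ∑ j, g j = ∑ j, g j * (∑ x, (ν j : X → ℝ) x) := by
      refine Finset.sum_congr rfl fun j _ => ?_
      rw [show ∑ x, (ν j : X → ℝ) x = 1 from (ν j).2.2, mul_one]
    rw [this]
    simp_rw [Finset.mul_sum]
    rw [Finset.sum_comm]
    simp [hgx]
  set w : Fin n → ℝ := fun i => ∑ j, g j * V i (ν j) with hw
  set ε : ℝ := Finset.univ.inf' Finset.univ_nonempty (fun j => p j / (|g j| + 1)) with hε
  have hεpos : 0 < ε := by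
    rw [hε, Finset.lt_inf'_iff]
    intro j _
    have := hpos j
    positivity
  have hεle : ∀ j, |ε * g j| ≤ p j := by
    intro j
    have h1 : ε ≤ p j / (|g j| + 1) := Finset.inf'_le _ (Finset.mem_univ j)
    have h2 : ε * (|g j| + 1) ≤ p j := by
      rw [← le_div_iff₀ (by positivity)]
      exact h1
    rw [abs_mul, abs_of_pos hεpos]
    nlinarith [abs_nonneg (g j), hεpos.le]
  have hpert : ∀ s : ℝ, |s| ≤ ε → IRep V μ (v + s • w) (m + 1) := by
    intro s hs
    have hsle : ∀ j, |s * g j| ≤ p j := by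
      intro j
      refine le_trans ?_ (hεle j)
      rw [abs_mul, abs_mul]
      have := abs_nonneg (g j)
      nlinarith [abs_nonneg s, abs_of_pos hεpos]
    refine ⟨fun j => p j + s * g j, ν, ?_, ?_, fun x => ?_, fun i => ?_⟩
    · intro j
      have := (abs_le.mp (hsle j)).1
      show 0 ≤ p j + s * g j
      linarith
    · rw [Finset.sum_add_distrib, hp1, ← Finset.mul_sum, hgsum, mul_zero, add_zero]
    · simp_rw [add_mul, Finset.sum_add_distrib, hbary x, mul_assoc, ← Finset.mul_sum, hgx x,
        mul_zero, add_zero]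
    · simp only [Pi.add_apply, Pi.smul_apply, smul_eq_mul]
      simp_rw [add_mul, Finset.sum_add_distrib, hval i, mul_assoc, ← Finset.mul_sum]
      rfl
  have hw0 : ∀ i, w i = 0 := by
    have hm1 : v - ε • w ∈ VSet V μ := by
      have := rep_mem_VSet hV (hpert (-ε) (by rw [abs_neg, abs_of_pos hεpos]))
      simpa [sub_eq_add_neg, neg_smul] using this
    have hm2 : v + ε • w ∈ VSet V μ :=
      rep_mem_VSet hV (hpert ε (by rw [abs_of_pos hεpos]))
    have hseg : v ∈ openSegment ℝ (v - ε • w) (v + ε • w) :=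
      ⟨1/2, 1/2, by norm_num, by norm_num, by norm_num, by module⟩
    have h2 := ((mem_extremePoints.mp hv).2 _ hm1 _ hm2 hseg).2
    intro i
    have := congrFun h2 i
    simp only [Pi.add_apply, Pi.smul_apply, smul_eq_mul] at this
    have : ε * w i = 0 := by linarith
    exact (mul_eq_zero.mp this).resolve_left hεpos.ne'
  have hneg : ∃ j, g j < 0 := by
    by_contra hno
    push_neg at hno
    have : ∀ j ∈ Finset.univ, g j = 0 :=
      fun j _ => le_antisymm (by
        have := Finset.single_le_sum (f := g) (fun j _ => hno j) (Finset.mem_univ j)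
        linarith [hgsum ▸ this]) (hno j)
    exact hj1 (this j1 (Finset.mem_univ j1))
  set S : Finset (Fin (m+1)) := Finset.univ.filter (fun j => g j < 0) with hS
  have hSne : S.Nonempty := by
    obtain ⟨j, hj⟩ := hneg
    exact ⟨j, by simp [hS, hj]⟩
  set t0 : ℝ := S.inf' hSne (fun j => p j / (-g j)) with ht0
  have hq0 : ∀ j, 0 ≤ p j + t0 * g j := by
    intro j
    rcases lt_or_ge (g j) 0 with h | h
    · have h1 : t0 ≤ p j / (-g j) := Finset.inf'_le _ (by simp [hS, h])
      have h2 : t0 * (-g j) ≤ p j := by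
        rw [← le_div_iff₀ (by linarith)]
        exact h1
      linarith
    · have ht0pos : 0 < t0 := by
        rw [ht0, Finset.lt_inf'_iff]
        intro j hj
        rw [hS, Finset.mem_filter] at hj
        exact div_pos (hpos j) (by linarith [hj.2])
      nlinarith [hpos j]
  obtain ⟨js, hjs, hjseq⟩ := Finset.exists_mem_eq_inf' hSne (fun j => p j / (-g j))
  have hgjs : g js < 0 := by
    rw [hS, Finset.mem_filter] at hjs
    exact hjs.2
  have hqjs : p js + t0 * g js = 0 := by
    have ht : t0 = p js / -g js := ht0.trans hjseq
    have hne : g js ≠ 0 := ne_of_lt hgjs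
    rw [ht]
    field_simp
    ring
  have hrep2 : IRep V μ v m := by
    apply rep_drop (fun j => p j + t0 * g j) ν hq0 ?_ ?_ ?_ js hqjs
    · rw [Finset.sum_add_distrib, hp1, ← Finset.mul_sum, hgsum, mul_zero, add_zero]
    · intro x
      simp_rw [add_mul, Finset.sum_add_distrib, hbary x, mul_assoc, ← Finset.mul_sum, hgx x,
        mul_zero, add_zero]
    · intro i
      simp_rw [add_mul, Finset.sum_add_distrib, hval i, mul_assoc, ← Finset.mul_sum]
      have : ∑ j, g j * V i (ν j) = 0 := hw0 i
      rw [this, mul_zero, add_zero]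
  exact hmin hrep2

theorem stepA (hV : ∀ i, Continuous (V i))
    (P : ProbabilityMeasure (stdSimplex ℝ X)) (hP : isBary P μ) (hPv : ∀ i, expct P (V i) = v i) :
    ((μ : X → ℝ), v) ∈ convexHull ℝ
      (Set.range fun ν : stdSimplex ℝ X => ((ν : X → ℝ), fun i => V i ν)) := by
  set Φ : stdSimplex ℝ X → (X → ℝ) × (Fin n → ℝ) :=
    fun ν => ((ν : X → ℝ), fun i => V i ν) with hΦdef
  have hΦ : Continuous Φ := continuous_subtype_val.prodMk (continuous_pi fun i => hV i)
  set PM := (P : Measure (stdSimplex ℝ X)) with hPM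
  have hint : Integrable Φ PM := integrable_cont _ hΦ
  have hmem : (∫ ν, Φ ν ∂PM) ∈ convexHull ℝ (Set.range Φ) := by
    apply (convex_convexHull ℝ _).integral_mem
      (myCompactHull (isCompact_range hΦ)).isClosed
      (Filter.Eventually.of_forall fun ν => subset_convexHull ℝ _ (Set.mem_range_self ν)) hint
  have h1 : (∫ ν, Φ ν ∂PM).1 = (μ : X → ℝ) := by
    funext x
    have := ((ContinuousLinearMap.proj x (R := ℝ) (φ := fun _ : X => ℝ)).comp
      (ContinuousLinearMap.fst ℝ (X → ℝ) (Fin n → ℝ))).integral_comp_comm hint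
    simpa using this.symm.trans (hP x)
  have h2 : (∫ ν, Φ ν ∂PM).2 = v := by
    funext i
    have := ((ContinuousLinearMap.proj i (R := ℝ) (φ := fun _ : Fin n => ℝ)).comp
      (ContinuousLinearMap.snd ℝ (X → ℝ) (Fin n → ℝ))).integral_comp_comm hint
    simpa using this.symm.trans (hPv i)
  rw [← h1, ← h2]
  exact hmem

end Aux

/-- every extreme point `v` of `𝒱(μ)` is implemented by some `P ∈ Δ²(X)` with
barycenter `μ` and support of size at most `|X|`. -/
theorem statement_4 {X : Type*} [Fintype X] [Nonempty X] {n : ℕ}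
    (V : Fin n → stdSimplex ℝ X → ℝ) (hV : ∀ i, Continuous (V i))
    (μ : stdSimplex ℝ X) (v : Fin n → ℝ)
    (hv : v ∈ Set.extremePoints ℝ (VSet V μ)) :
    ∃ P : ProbabilityMeasure (stdSimplex ℝ X),
      isBary P μ ∧ finSupp P (Fintype.card X) ∧ ∀ i, expct P (V i) = v i := by
  obtain ⟨P0, hP0b, hP0v⟩ := hv.1
  have hmem := stepA hV P0 hP0b hP0v
  have hex := rep_of_hull hmem
  obtain ⟨k, hk, hrep⟩ := rep_descent hV hv hex
  obtain ⟨p, ν, hp0, hp1, hbary, hval⟩ := rep_pad hrep hk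
  obtain ⟨P, hPm, hPint⟩ := exists_pm p ν hp0 hp1
  exact ⟨P,
    fun x => (hPint _ ((continuous_apply x).comp continuous_subtype_val)).trans (hbary x),
    ⟨p, ν, hp0, hp1, hPm⟩,
    fun i => (hPint _ (hV i)).trans (hval i)⟩
end
end

section
/- The graph of the correspondence 𝒱, namely Gr(𝒱) = { (μ, v) ∈ Δ(X) × ℝ^n : v ∈ 𝒱(μ) }, is a convex and compact subset of ℝ^X × ℝ^n. -/
open MeasureTheory Topology Filter

noncomputable section

instance inst_s7 {X : Type*} [Fintype X] : CompactSpace (stdSimplex ℝ X) :=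
  isCompact_iff_compactSpace.mp (isCompact_stdSimplex ℝ X)

instance {X : Type*} [Fintype X] [Nonempty X] : Nonempty (stdSimplex ℝ X) := by
  classical
  exact ⟨⟨_, single_mem_stdSimplex ℝ (Classical.arbitrary X)⟩⟩

/-- Carathéodory with a uniform bound on the number of points, for subsets of the
range of a map from a nonempty type. -/
lemma carath {E : Type*} [NormedAddCommGroup E] [NormedSpace ℝ E] [FiniteDimensional ℝ E]
    {α : Type*} [Nonempty α] (f : α → E) {x : E} (hx : x ∈ convexHull ℝ (Set.range f)) :
    ∃ (w : Fin (Module.finrank ℝ E + 1) → ℝ) (ν : Fin (Module.finrank ℝ E + 1) → α),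
      (∀ j, 0 ≤ w j) ∧ (∑ j, w j = 1) ∧ (∑ j, w j • f (ν j) = x) := by
  classical
  obtain ⟨ι, hfin, z, w, hzS, hind, hpos, hsum, hcomb⟩ :=
    eq_pos_convex_span_of_mem_convexHull hx
  have hcard : Fintype.card ι ≤ Module.finrank ℝ E + 1 :=
    le_trans hind.card_le_finrank_succ (by
      have := Submodule.finrank_le (vectorSpan ℝ (Set.range z))
      omega)
  obtain ⟨e⟩ := Function.Embedding.nonempty_of_card_le (β := Fin (Module.finrank ℝ E + 1))
    (by simpa using hcard)
  have hz : ∀ i, ∃ a, f a = z i := fun i => hzS (Set.mem_range_self i)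
  choose ν hν using hz
  have ν₀ : α := Classical.arbitrary α
  refine ⟨Function.extend e w 0, Function.extend e ν (fun _ => ν₀), ?_, ?_, ?_⟩
  · intro j
    rcases em (∃ i, e i = j) with ⟨i, rfl⟩ | h
    · rw [e.injective.extend_apply]; exact (hpos i).le
    · rw [Function.extend_apply' _ _ _ h]; rfl
  · rw [← Finset.sum_subset (Finset.subset_univ (Finset.univ.map e))]
    · rw [Finset.sum_map]
      simpa [e.injective.extend_apply] using hsum
    · intro j _ hj
      have h : ¬∃ i, e i = j := by simpa [Finset.mem_map] using hj
      rw [Function.extend_apply' _ _ _ h]; rfl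
  · rw [← Finset.sum_subset (Finset.subset_univ (Finset.univ.map e))]
    · rw [Finset.sum_map]
      simp only [Function.Embedding.coeFn_mk, e.injective.extend_apply, hν]
      exact hcomb
    · intro j _ hj
      have h : ¬∃ i, e i = j := by simpa [Finset.mem_map] using hj
      rw [Function.extend_apply' _ _ _ h, Function.extend_apply' _ _ _ h]
      simp

lemma integral_sum_dirac {X : Type*} [Fintype X] {m : ℕ} (w : Fin m → ℝ)
    (ν : Fin m → stdSimplex ℝ X) (hw : ∀ j, 0 ≤ w j)
    (W : stdSimplex ℝ X → ℝ) (hW : Continuous W) :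
    ∫ x, W x ∂(∑ j, ENNReal.ofReal (w j) • Measure.dirac (ν j)) = ∑ j, w j * W (ν j) := by
  rw [integral_finset_sum_measure]
  · refine Finset.sum_congr rfl fun j _ => ?_
    rw [integral_smul_measure, integral_dirac, smul_eq_mul, ENNReal.toReal_ofReal (hw j)]
  · intro j _
    exact (hW.integrable_of_hasCompactSupport
      (HasCompactSupport.of_compactSpace W)).smul_measure ENNReal.ofReal_ne_top

lemma isProb_sum_dirac {X : Type*} [Fintype X] {m : ℕ} (w : Fin m → ℝ)
    (ν : Fin m → stdSimplex ℝ X) (hw : ∀ j, 0 ≤ w j) (hw1 : ∑ j, w j = 1) :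
    IsProbabilityMeasure (∑ j, ENNReal.ofReal (w j) • Measure.dirac (ν j) :
      Measure (stdSimplex ℝ X)) := by
  constructor
  simp only [Measure.coe_finset_sum, Finset.sum_apply, Measure.smul_apply,
    Measure.dirac_apply_of_mem (Set.mem_univ _), smul_eq_mul, mul_one]
  rw [← ENNReal.ofReal_sum_of_nonneg (fun j _ => hw j), hw1, ENNReal.ofReal_one]

/-- the graph `Gr(𝒱) = {(μ, v) : μ ∈ Δ(X), v ∈ 𝒱(μ)} ⊆ ℝ^X × ℝ^n` is convex
and compact. -/
theorem statement_7 {X : Type*} [Fintype X] [Nonempty X] {n : ℕ}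
    (V : Fin n → stdSimplex ℝ X → ℝ) (hV : ∀ i, Continuous (V i)) :
    Convex ℝ {q : (X → ℝ) × (Fin n → ℝ) | ∃ μ : stdSimplex ℝ X, q.1 = ↑μ ∧ q.2 ∈ VSet V μ} ∧
    IsCompact {q : (X → ℝ) × (Fin n → ℝ) | ∃ μ : stdSimplex ℝ X, q.1 = ↑μ ∧ q.2 ∈ VSet V μ} := by
  classical
  set G := {q : (X → ℝ) × (Fin n → ℝ) | ∃ μ : stdSimplex ℝ X, q.1 = ↑μ ∧ q.2 ∈ VSet V μ} with hG
  set f : stdSimplex ℝ X → (X → ℝ) × (Fin n → ℝ) :=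
    fun ν => (↑ν, fun i => V i ν) with hfdef
  have hfc : Continuous f := continuous_subtype_val.prodMk (continuous_pi fun i => hV i)
  set m : ℕ := Module.finrank ℝ ((X → ℝ) × (Fin n → ℝ)) + 1 with hm
  set g : (Fin m → ℝ) × (Fin m → stdSimplex ℝ X) → (X → ℝ) × (Fin n → ℝ) :=
    fun p => ∑ j, p.1 j • f (p.2 j) with hgdef
  set T : Set ((X → ℝ) × (Fin n → ℝ)) := g '' (stdSimplex ℝ (Fin m) ×ˢ Set.univ) with hT
  -- T is compact
  have hTcomp : IsCompact T := by
    refine ((isCompact_stdSimplex ℝ (Fin m)).prod isCompact_univ).image ?_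
    exact continuous_finset_sum _ fun j _ =>
      ((continuous_apply j).comp continuous_fst).smul
        (hfc.comp ((continuous_apply j).comp continuous_snd))
  -- T ⊆ G
  have hTG : T ⊆ G := by
    rintro q ⟨⟨w, ν⟩, ⟨hwmem, -⟩, rfl⟩
    obtain ⟨hw0, hw1⟩ := hwmem
    have hprob := isProb_sum_dirac w ν hw0 hw1
    set P : ProbabilityMeasure (stdSimplex ℝ X) :=
      ⟨∑ j, ENNReal.ofReal (w j) • Measure.dirac (ν j), hprob⟩ with hP
    have hexp : ∀ (W : stdSimplex ℝ X → ℝ), Continuous W →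
        expct P W = ∑ j, w j * W (ν j) := fun W hW => integral_sum_dirac w ν hw0 W hW
    have hμmem : (∑ j, w j • (ν j : X → ℝ)) ∈ stdSimplex ℝ X :=
      (convex_stdSimplex ℝ X).sum_mem (fun j _ => hw0 j) hw1 (fun j _ => (ν j).2)
    refine ⟨⟨_, hμmem⟩, ?_, P, ?_, ?_⟩
    · show (g (w, ν)).1 = _
      simp only [hgdef, Prod.fst_sum, hfdef, Prod.smul_fst]
      rfl
    · intro x
      rw [hexp (fun ν => (ν : X → ℝ) x) (by exact (continuous_apply x).comp continuous_subtype_val)]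
      change _ = (∑ j, w j • (ν j : X → ℝ)) x
      simp only [Finset.sum_apply, Pi.smul_apply, smul_eq_mul]
    · intro i
      rw [hexp (V i) (hV i)]
      show _ = (g (w, ν)).2 i
      simp only [hgdef, Prod.snd_sum, hfdef, Prod.smul_snd, Finset.sum_apply, Pi.smul_apply,
        smul_eq_mul]
  -- G ⊆ closure (convexHull ℝ (range f))
  have hGB : G ⊆ closure (convexHull ℝ (Set.range f)) := by
    rintro ⟨q1, q2⟩ ⟨μ, hq1, P, hbary, hv⟩
    have hi : Integrable f (P : Measure (stdSimplex ℝ X)) :=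
      hfc.integrable_of_hasCompactSupport (HasCompactSupport.of_compactSpace _)
    have hint : ∫ ν, f ν ∂(P : Measure (stdSimplex ℝ X)) = (q1, q2) := by
      ext y
      · have := (ContinuousLinearMap.proj (R := ℝ) (φ := fun _ : X => ℝ) y |>.comp
           (ContinuousLinearMap.fst ℝ (X → ℝ) (Fin n → ℝ))).integral_comp_comm hi
        simp only [ContinuousLinearMap.coe_comp', Function.comp_apply,
          ContinuousLinearMap.coe_fst', ContinuousLinearMap.proj_apply] at this
        rw [← this, hq1]
        exact hbary y
      · have := (ContinuousLinearMap.proj (R := ℝ) (φ := fun _ : Fin n => ℝ) y |>.comp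
           (ContinuousLinearMap.snd ℝ (X → ℝ) (Fin n → ℝ))).integral_comp_comm hi
        simp only [ContinuousLinearMap.coe_comp', Function.comp_apply,
          ContinuousLinearMap.coe_snd', ContinuousLinearMap.proj_apply] at this
        rw [← this]
        exact hv y
    rw [← hint]
    refine Convex.integral_mem ((convex_convexHull ℝ _).closure) isClosed_closure ?_ hi
    exact Eventually.of_forall fun ν =>
      subset_closure (subset_convexHull ℝ _ (Set.mem_range_self ν))
  -- convexHull ⊆ T
  have hCT : convexHull ℝ (Set.range f) ⊆ T := by
    intro x hx
    obtain ⟨w, ν, hw0, hw1, hsum⟩ := carath f hx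
    exact ⟨(w, ν), ⟨⟨hw0, hw1⟩, Set.mem_univ _⟩, hsum⟩
  have hclT : closure (convexHull ℝ (Set.range f)) ⊆ T :=
    closure_minimal hCT hTcomp.isClosed
  have hGeq : G = closure (convexHull ℝ (Set.range f)) :=
    Set.Subset.antisymm hGB ((hclT.trans hTG).trans (fun a ha => ha))
  constructor
  · rw [hGeq]; exact (convex_convexHull ℝ _).closure
  · rw [Set.Subset.antisymm (hGB.trans hclT) hTG]
    exact hTcomp
end
end

section
/- The correspondence μ ↦ 𝒱(μ) from Δ(X) to subsets of ℝ^n is upper hemicontinuous: for every sequence μ_m → μ in Δ(X) and every sequence v_m ∈ 𝒱(μ_m) with v_m → v in ℝ^n, one has v ∈ 𝒱(μ). -/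
/-!
A pair `(μ, v)` is in the graph of `𝒱` exactly when it is `∫ (ν, V ν) dP` for some `P`, i.e. when
it lies in the convex hull of the range of the continuous map `ν ↦ (ν, V ν)`: the integral of a
continuous map on a compact space lies in the closed convex hull of its range, and conversely a
convex combination of values is the integral against a finite sum of Dirac masses. By
Carathéodory's theorem the convex hull of a compact subset of a finite-dimensional space is
compact, so this graph is closed.
-/

open MeasureTheory Topology Filter

noncomputable section

open Set

section ConvexHull

variable {E : Type*} [NormedAddCommGroup E] [NormedSpace ℝ E]

theorem convexHull_eq_iUnion_image_stdSimplex [FiniteDimensional ℝ E] (s : Set E) :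
    convexHull ℝ s = ⋃ k : Fin (Module.finrank ℝ E + 2),
      (fun p : (Fin k → ℝ) × (Fin k → E) => ∑ j, p.1 j • p.2 j) ''
        (stdSimplex ℝ (Fin k) ×ˢ univ.pi fun _ => s) := by
  refine Subset.antisymm (fun x hx => ?_) (iUnion_subset fun k => ?_)
  · obtain ⟨ι, _, z, w, hzs, hz, hw₀, hw₁, rfl⟩ := eq_pos_convex_span_of_mem_convexHull hx
    have hcard : Fintype.card ι < Module.finrank ℝ E + 2 := by
      have := hz.card_le_finrank_succ
      have := Submodule.finrank_le (vectorSpan ℝ (range z))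
      omega
    let e := Fintype.equivFin ι
    refine mem_iUnion.2 ⟨⟨_, hcard⟩, (w ∘ e.symm, z ∘ e.symm), ⟨⟨fun j => (hw₀ _).le, ?_⟩,
      fun j _ => hzs (mem_range_self _)⟩, e.symm.sum_comp fun i => w i • z i⟩
    exact (e.symm.sum_comp w).trans hw₁
  · rintro _ ⟨⟨w, z⟩, ⟨hw, hz⟩, rfl⟩
    exact (convex_convexHull ℝ s).sum_mem (fun j _ => hw.1 j) hw.2
      fun j _ => subset_convexHull ℝ s (hz j (mem_univ j))

/-- Carathéodory's theorem makes the convex hull a finite union of continuous images of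
compact sets. -/
theorem IsCompact.convexHull [FiniteDimensional ℝ E] {s : Set E} (hs : IsCompact s) :
    IsCompact (convexHull ℝ s) := by
  rw [convexHull_eq_iUnion_image_stdSimplex]
  exact isCompact_iUnion fun k =>
    ((isCompact_stdSimplex ℝ _).prod (isCompact_univ_pi fun _ => hs)).image (by fun_prop)

variable {α : Type*} [MeasurableSpace α]

theorem integral_mem_convexHull_range [TopologicalSpace α] [CompactSpace α]
    [OpensMeasurableSpace α] [FiniteDimensional ℝ E] {f : α → E} (hf : Continuous f)
    (P : Measure α) [IsProbabilityMeasure P] :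
    ∫ a, f a ∂P ∈ convexHull ℝ (range f) :=
  (convex_convexHull ℝ _).integral_mem (isCompact_range hf).convexHull.isClosed
    (ae_of_all _ fun a => subset_convexHull ℝ _ (mem_range_self a))
    (hf.integrable_of_hasCompactSupport (.of_compactSpace f))

theorem exists_probabilityMeasure_integral_eq_of_mem_convexHull [CompleteSpace E]
    [MeasurableSingletonClass α] {f : α → E} {x : E} (hx : x ∈ convexHull ℝ (range f)) :
    ∃ P : ProbabilityMeasure α, ∫ a, f a ∂P = x := by
  obtain ⟨ι, _, w, z, hw₀, hw₁, hz, rfl⟩ := mem_convexHull_iff_exists_fintype.1 hx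
  choose a ha using hz
  let P : Measure α := ∑ i, ENNReal.ofReal (w i) • Measure.dirac (a i)
  have hP : IsProbabilityMeasure P := ⟨by
    simp only [P, Measure.coe_finsetSum, Finset.sum_apply, Measure.smul_apply, measure_univ,
      smul_eq_mul, mul_one]
    rw [← ENNReal.ofReal_sum_of_nonneg fun i _ => hw₀ i, hw₁, ENNReal.ofReal_one]⟩
  refine ⟨⟨P, hP⟩, ?_⟩
  change ∫ b, f b ∂P = _
  rw [integral_finsetSum_measure fun i _ =>
    (integrable_dirac (by simp)).smul_measure ENNReal.ofReal_ne_top]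
  refine Finset.sum_congr rfl fun i _ => ?_
  rw [integral_smul_measure, integral_dirac, ENNReal.toReal_ofReal (hw₀ i), ha]

end ConvexHull

section Information

variable {X : Type*} [Fintype X] {n : ℕ}

def valueGraph (V : Fin n → stdSimplex ℝ X → ℝ) (ν : stdSimplex ℝ X) : (X → ℝ) × (Fin n → ℝ) :=
  ((ν : X → ℝ), fun i => V i ν)

variable {V : Fin n → stdSimplex ℝ X → ℝ}

theorem continuous_valueGraph (hV : ∀ i, Continuous (V i)) : Continuous (valueGraph V) :=
  continuous_subtype_val.prodMk (continuous_pi hV)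

theorem integral_valueGraph_eq_iff (hV : ∀ i, Continuous (V i))
    (P : ProbabilityMeasure (stdSimplex ℝ X)) (μ : stdSimplex ℝ X) (v : Fin n → ℝ) :
    ∫ ν, valueGraph V ν ∂(P : Measure (stdSimplex ℝ X)) = ((μ : X → ℝ), v) ↔
      isBary P μ ∧ ∀ i, expct P (V i) = v i := by
  have hint {W : stdSimplex ℝ X → ℝ} (hW : Continuous W) :
      Integrable W (P : Measure (stdSimplex ℝ X)) :=
    hW.integrable_of_hasCompactSupport (.of_compactSpace W)
  have hbary : ∀ x, Integrable (fun ν : stdSimplex ℝ X => (ν : X → ℝ) x)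
      (P : Measure (stdSimplex ℝ X)) := fun x => hint ((continuous_apply x).comp continuous_subtype_val)
  simp only [valueGraph]
  rw [integral_pair (Integrable.of_eval hbary)
    (Integrable.of_eval fun i => hint (hV i)), Prod.ext_iff, funext_iff, funext_iff]
  simp only [eval_integral hbary, eval_integral fun i => hint (hV i)]
  rfl

theorem mem_VSet_iff (hV : ∀ i, Continuous (V i)) (μ : stdSimplex ℝ X) (v : Fin n → ℝ) :
    v ∈ VSet V μ ↔ ((μ : X → ℝ), v) ∈ convexHull ℝ (range (valueGraph V)) := by
  constructor
  · rintro ⟨P, hP⟩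
    rw [← (integral_valueGraph_eq_iff hV P μ v).2 hP]
    exact integral_mem_convexHull_range (continuous_valueGraph hV) _
  · intro h
    obtain ⟨P, hP⟩ := exists_probabilityMeasure_integral_eq_of_mem_convexHull h
    exact ⟨P, (integral_valueGraph_eq_iff hV P μ v).1 hP⟩

end Information

theorem statement_8_general {X : Type*} [Fintype X] {n : ℕ}
    (V : Fin n → stdSimplex ℝ X → ℝ) (hV : ∀ i, Continuous (V i))
    (μs : ℕ → stdSimplex ℝ X) (μ : stdSimplex ℝ X)
    (hμ : Tendsto μs atTop (𝓝 μ))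
    (vs : ℕ → Fin n → ℝ) (v : Fin n → ℝ)
    (hvs : ∀ m, vs m ∈ VSet V (μs m))
    (hv : Tendsto vs atTop (𝓝 v)) :
    v ∈ VSet V μ := by
  have hclosed : IsClosed (convexHull ℝ (range (valueGraph V))) :=
    (isCompact_range (continuous_valueGraph hV)).convexHull.isClosed
  have hlim : Tendsto (fun m => ((μs m : X → ℝ), vs m)) atTop (𝓝 ((μ : X → ℝ), v)) :=
    ((continuous_subtype_val.tendsto μ).comp hμ).prodMk_nhds hv
  exact (mem_VSet_iff hV μ v).2 <| hclosed.mem_of_tendsto hlim <|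
    Eventually.of_forall fun m => (mem_VSet_iff hV (μs m) (vs m)).1 (hvs m)

/-- the correspondence `μ ↦ 𝒱(μ)` is upper hemicontinuous: if `μ_m → μ`,
`v_m ∈ 𝒱(μ_m)` and `v_m → v`, then `v ∈ 𝒱(μ)`. -/
theorem statement_8 {X : Type*} [Fintype X] [Nonempty X] {n : ℕ}
    (V : Fin n → stdSimplex ℝ X → ℝ) (hV : ∀ i, Continuous (V i))
    (μs : ℕ → stdSimplex ℝ X) (μ : stdSimplex ℝ X)
    (hμ : Tendsto μs atTop (𝓝 μ))
    (vs : ℕ → Fin n → ℝ) (v : Fin n → ℝ)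
    (hvs : ∀ m, vs m ∈ VSet V (μs m))
    (hv : Tendsto vs atTop (𝓝 v)) :
    v ∈ VSet V μ :=
  statement_8_general V hV μs μ hμ vs v hvs hv
end
end

section
/- The correspondence μ ↦ 𝒱(μ) from Δ(X) to subsets of ℝ^n is lower hemicontinuous: for every sequence μ_m → μ in Δ(X) and every v ∈ 𝒱(μ), there exist v_m ∈ 𝒱(μ_m) with v_m → v. -/
/-!
Given `P` with barycenter `μ`, mix it with a Dirac mass: `(1 - ε) P + ε δ_σ` has barycenter
`(1 - ε) μ + ε σ` and value vector `(1 - ε) v + ε V(σ)`. The barycenter equals `μ'` for some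
`σ ∈ Δ(X)` as soon as `(1 - ε) μ ≤ μ'` coordinatewise, and when `μ_m → μ` this holds for a
sequence `ε_m → 0`. As the `V^i` are bounded on the compact simplex, the values then tend to `v`.
-/

open MeasureTheory Topology Filter

noncomputable section

namespace MeasureTheory.ProbabilityMeasure

variable {Ω : Type*} [MeasurableSpace Ω]

def mixDirac (P : ProbabilityMeasure Ω) (t : unitInterval) (σ : Ω) : ProbabilityMeasure Ω :=
  ⟨ENNReal.ofReal (1 - t) • (P : Measure Ω) + ENNReal.ofReal t • Measure.dirac σ, by
    constructor
    simp only [Measure.add_apply, Measure.smul_apply, smul_eq_mul, measure_univ, mul_one]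
    rw [← ENNReal.ofReal_add (by linarith [t.2.2]) t.2.1]
    simp⟩

theorem integral_mixDirac [MeasurableSingletonClass Ω] {E : Type*} [NormedAddCommGroup E]
    [NormedSpace ℝ E] [CompleteSpace E] (P : ProbabilityMeasure Ω) (t : unitInterval) (σ : Ω)
    {W : Ω → E} (hW : Integrable W P) :
    ∫ ω, W ω ∂(mixDirac P t σ) = (1 - (t : ℝ)) • ∫ ω, W ω ∂P + (t : ℝ) • W σ := by
  have hWσ : Integrable W (Measure.dirac σ) := integrable_dirac enorm_lt_top
  rw [mixDirac, ProbabilityMeasure.coe_mk,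
    integral_add_measure (hW.smul_measure ENNReal.ofReal_ne_top)
      (hWσ.smul_measure ENNReal.ofReal_ne_top),
    integral_smul_measure, integral_smul_measure, integral_dirac,
    ENNReal.toReal_ofReal (by linarith [t.2.2]), ENNReal.toReal_ofReal t.2.1]

end MeasureTheory.ProbabilityMeasure

theorem exists_mem_stdSimplex_eq_one_sub_smul_add_smul {ι : Type*} [Fintype ι] {μ μ' : ι → ℝ}
    (hμ : μ ∈ stdSimplex ℝ ι) (hμ' : μ' ∈ stdSimplex ℝ ι) {ε : ℝ} (hε : 0 < ε)
    (hle : ∀ x, (1 - ε) * μ x ≤ μ' x) :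
    ∃ σ ∈ stdSimplex ℝ ι, μ' = (1 - ε) • μ + ε • σ := by
  refine ⟨ε⁻¹ • (μ' - (1 - ε) • μ), ⟨fun x => ?_, ?_⟩, ?_⟩
  · simpa using mul_nonneg (inv_nonneg.2 hε.le) (sub_nonneg.2 (hle x))
  · simp [← Finset.mul_sum, Finset.sum_sub_distrib, hμ.2, hμ'.2, hε.ne']
  · rw [smul_smul, mul_inv_cancel₀ hε.ne', one_smul, add_sub_cancel]

theorem exists_tendsto_zero_one_sub_mul_le {ι : Type*} [Fintype ι] {μs : ℕ → ι → ℝ}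
    {μ : ι → ℝ} (hμs : Tendsto μs atTop (𝓝 μ)) (hμ : ∀ x, 0 ≤ μ x) (hμs0 : ∀ m x, 0 ≤ μs m x) :
    ∃ ε : ℕ → ℝ, (∀ m, ε m ∈ Set.Ioc 0 1) ∧ (∀ m x, (1 - ε m) * μ x ≤ μs m x) ∧
      Tendsto ε atTop (𝓝 0) := by
  -- the junk value `_ / 0 = 0` makes the coordinates with `μ x = 0` drop out of the sum
  set s : ℕ → ℝ := fun m => 1 / ((m : ℝ) + 1) + ∑ x, |μ x - μs m x| / μ x
  have hs : ∀ m, 0 < s m := fun m =>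
    add_pos_of_pos_of_nonneg (by positivity)
      (Finset.sum_nonneg fun x _ => div_nonneg (abs_nonneg _) (hμ x))
  refine ⟨fun m => min 1 (s m), fun m => ⟨lt_min one_pos (hs m), min_le_left _ _⟩,
    fun m x => ?_, ?_⟩
  · rcases (hμ x).eq_or_lt with h0 | hpos
    · simp [← h0, hμs0 m x]
    have hdef : μ x - μs m x ≤ s m * μ x :=
      calc μ x - μs m x ≤ |μ x - μs m x| / μ x * μ x := by
            rw [div_mul_cancel₀ _ hpos.ne']; exact le_abs_self _
        _ ≤ s m * μ x := by
          gcongr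
          exact (Finset.single_le_sum (f := fun y => |μ y - μs m y| / μ y)
            (fun y _ => div_nonneg (abs_nonneg _) (hμ y)) (Finset.mem_univ x)).trans
            (le_add_of_nonneg_left (by positivity))
    show (1 - min 1 (s m)) * μ x ≤ μs m x
    rcases min_cases 1 (s m) with ⟨h, -⟩ | ⟨h, -⟩ <;> rw [h]
    · simpa using hμs0 m x
    · linarith
  · have hsum : Tendsto (fun m => ∑ x, |μ x - μs m x| / μ x) atTop (𝓝 0) := by
      simpa using tendsto_finsetSum Finset.univ fun x _ =>
        ((tendsto_const_nhds (x := μ x)).sub (tendsto_pi_nhds.1 hμs x)).abs.div_const (μ x)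
    simpa [s] using (tendsto_const_nhds (x := (1 : ℝ))).min
      (tendsto_one_div_add_atTop_nhds_zero_nat.add hsum)

theorem tendsto_one_sub_smul_add_smul {α E : Type*} [SeminormedAddCommGroup E] [NormedSpace ℝ E]
    {l : Filter α} {t : α → ℝ} {g : α → E} (ht : Tendsto t l (𝓝 0))
    (hg : IsBoundedUnder (· ≤ ·) l (norm ∘ g)) (a : E) :
    Tendsto (fun m => (1 - t m) • a + t m • g m) l (𝓝 a) := by
  simpa using (((tendsto_const_nhds (x := (1 : ℝ))).sub ht).smul_const a).add
    (ht.zero_smul_isBoundedUnder_le hg)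

theorem one_sub_smul_add_smul_mem_VSet {X : Type*} [Fintype X] {n : ℕ}
    {V : Fin n → stdSimplex ℝ X → ℝ} (hV : ∀ i, Continuous (V i)) {μ μ' σ : stdSimplex ℝ X}
    {v : Fin n → ℝ} (hv : v ∈ VSet V μ) (t : unitInterval)
    (hμ' : (μ' : X → ℝ) = (1 - (t : ℝ)) • (μ : X → ℝ) + (t : ℝ) • (σ : X → ℝ)) :
    (1 - (t : ℝ)) • v + (t : ℝ) • (fun i => V i σ) ∈ VSet V μ' := by
  obtain ⟨P, hbary, hPV⟩ := hv
  have hexpct : ∀ W, Continuous W →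
      expct (P.mixDirac t σ) W = (1 - (t : ℝ)) * expct P W + t * W σ := fun W hW =>
    P.integral_mixDirac t σ (hW.integrable_of_hasCompactSupport (.of_compactSpace W))
  refine ⟨P.mixDirac t σ, fun x => ?_, fun i => ?_⟩
  · rw [hexpct (fun ν => (ν : X → ℝ) x) ((continuous_apply x).comp continuous_subtype_val),
      hbary x, hμ']
    simp
  · rw [hexpct _ (hV i), hPV i]
    simp

theorem statement_9_general {X : Type*} [Fintype X] {n : ℕ}
    (V : Fin n → stdSimplex ℝ X → ℝ) (hV : ∀ i, Continuous (V i))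
    (μs : ℕ → stdSimplex ℝ X) (μ : stdSimplex ℝ X)
    (hμ : Tendsto μs atTop (𝓝 μ))
    (v : Fin n → ℝ) (hv : v ∈ VSet V μ) :
    ∃ vs : ℕ → Fin n → ℝ, (∀ m, vs m ∈ VSet V (μs m)) ∧ Tendsto vs atTop (𝓝 v) := by
  obtain ⟨ε, hε_mem, hε_le, hε⟩ := exists_tendsto_zero_one_sub_mul_le
    ((continuous_subtype_val.tendsto μ).comp hμ) μ.2.1 fun m => (μs m).2.1
  choose σ hσ hμσ using fun m =>
    exists_mem_stdSimplex_eq_one_sub_smul_add_smul μ.2 (μs m).2 (hε_mem m).1 (hε_le m)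
  obtain ⟨C, hC⟩ := isCompact_univ.exists_bound_of_continuousOn
    (continuous_pi hV).continuousOn
  exact ⟨fun m => (1 - ε m) • v + ε m • fun i => V i ⟨σ m, hσ m⟩,
    fun m => one_sub_smul_add_smul_mem_VSet hV hv ⟨ε m, Set.Ioc_subset_Icc_self (hε_mem m)⟩
      (hμσ m),
    tendsto_one_sub_smul_add_smul hε (isBoundedUnder_of ⟨C, fun m => hC _ trivial⟩) v⟩

/-- the correspondence `μ ↦ 𝒱(μ)` is lower hemicontinuous: if `μ_m → μ` and
`v ∈ 𝒱(μ)`, then there exist `v_m ∈ 𝒱(μ_m)` with `v_m → v`. -/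
theorem statement_9 {X : Type*} [Fintype X] [Nonempty X] {n : ℕ}
    (V : Fin n → stdSimplex ℝ X → ℝ) (hV : ∀ i, Continuous (V i))
    (μs : ℕ → stdSimplex ℝ X) (μ : stdSimplex ℝ X)
    (hμ : Tendsto μs atTop (𝓝 μ))
    (v : Fin n → ℝ) (hv : v ∈ VSet V μ) :
    ∃ vs : ℕ → Fin n → ℝ, (∀ m, vs m ∈ VSet V (μs m)) ∧ Tendsto vs atTop (𝓝 v) :=
  statement_9_general V hV μs μ hμ v hv
end
end

section
/- Let f : ℝ^n → ℝ be continuous, let D(μ) ⊆ ℝ^n be closed, and suppose 𝒱(μ) ∩ D(μ) ≠ ∅. Then the supremum of f(E_P[V^1], …, E_P[V^n]) over all P ∈ Δ²(X) with barycenter E_P[ν] = μ and (E_P[V^1], …, E_P[V^n]) ∈ D(μ) is attained, and it is attained by some P* with support of size at most (n+1)·|X|. -/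
open MeasureTheory Topology Filter

noncomputable section

namespace Stmt10Aux

variable {X : Type*} [Fintype X] [Nonempty X] {n : ℕ}

/-- Auxiliary product space `ℝ^n × ℝ^X`. -/
abbrev EE (n : ℕ) (X : Type*) : Type _ := (Fin n → ℝ) × (X → ℝ)

/-- The curve `ν ↦ (V(ν), ν)`. -/
def gmap (V : Fin n → stdSimplex ℝ X → ℝ) (ν : stdSimplex ℝ X) : EE n X :=
  (fun i => V i ν, (ν : X → ℝ))

lemma cont_gmap {V : Fin n → stdSimplex ℝ X → ℝ} (hV : ∀ i, Continuous (V i)) :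
    Continuous (gmap V) :=
  Continuous.prodMk (continuous_pi fun i => hV i) continuous_subtype_val

lemma integrable_cont {F : Type*} [NormedAddCommGroup F] [NormedSpace ℝ F]
    (μ : Measure (stdSimplex ℝ X)) [IsFiniteMeasure μ]
    {W : stdSimplex ℝ X → F} (hW : Continuous W) : Integrable W μ :=
  integrableOn_univ.mp ((hW.locallyIntegrable).integrableOn_isCompact isCompact_univ)

/-- Building a finitely–supported probability measure and computing its integrals. -/
lemma build_measure {m : ℕ} (p : Fin m → ℝ) (z : Fin m → stdSimplex ℝ X)
    (hp : ∀ j, 0 ≤ p j) (hs : ∑ j, p j = 1) :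
    ∃ P : ProbabilityMeasure (stdSimplex ℝ X),
      (P : Measure (stdSimplex ℝ X)) = ∑ j, ENNReal.ofReal (p j) • Measure.dirac (z j) ∧
      ∀ W : stdSimplex ℝ X → ℝ, Continuous W → expct P W = ∑ j, p j * W (z j) := by
  set M : Measure (stdSimplex ℝ X) := ∑ j, ENNReal.ofReal (p j) • Measure.dirac (z j) with hM
  have hMuniv : M Set.univ = 1 := by
    rw [hM]
    simp only [Measure.coe_finset_sum, Finset.sum_apply, Measure.smul_apply,
      Measure.dirac_apply' _ MeasurableSet.univ, Set.mem_univ, Set.indicator_of_mem,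
      Pi.one_apply, smul_eq_mul, mul_one]
    rw [← ENNReal.ofReal_sum_of_nonneg (fun j _ => hp j), hs, ENNReal.ofReal_one]
  have hMP : IsProbabilityMeasure M := ⟨hMuniv⟩
  have hfin : ∀ j : Fin m, IsFiniteMeasure (ENNReal.ofReal (p j) • Measure.dirac (z j)) := by
    intro j
    constructor
    rw [Measure.smul_apply, Measure.dirac_apply' _ MeasurableSet.univ]
    simp [ENNReal.ofReal_lt_top]
  refine ⟨⟨M, hMP⟩, rfl, ?_⟩
  intro W hW
  have hint : ∀ j ∈ Finset.univ, Integrable W (ENNReal.ofReal (p j) • Measure.dirac (z j)) := by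
    intro j _
    haveI := hfin j
    exact integrable_cont _ hW
  show ∫ ν, W ν ∂M = _
  rw [hM, integral_finset_sum_measure hint]
  refine Finset.sum_congr rfl fun j _ => ?_
  rw [integral_smul_measure, integral_dirac, ENNReal.toReal_ofReal (hp j), smul_eq_mul]

/-- Padding a sum over a finset to a sum over `Fin m`. -/
lemma pad_sum {M : Type*} [AddCommMonoid M] {α : Type*} (t : Finset α) {m : ℕ}
    (hm : t.card ≤ m) (F : α → M) :
    (∑ j : Fin m, if h : (j : ℕ) < t.card then F ((t.equivFin.symm ⟨(j : ℕ), h⟩ : t) : α) else 0)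
      = ∑ i ∈ t, F i := by
  rw [Fin.sum_univ_eq_sum_range
    (fun jn => if h : jn < t.card then F ((t.equivFin.symm ⟨jn, h⟩ : t) : α) else 0) m]
  rw [← Finset.sum_subset (Finset.range_subset_range.2 hm)
    (fun j _ hj => dif_neg (by simpa using hj))]
  rw [← Fin.sum_univ_eq_sum_range
    (fun jn => if h : jn < t.card then F ((t.equivFin.symm ⟨jn, h⟩ : t) : α) else 0) t.card]
  rw [Finset.sum_congr rfl (fun j _ => dif_pos j.isLt)]
  have : ∀ j : Fin t.card, (⟨(j : ℕ), j.isLt⟩ : Fin t.card) = j := fun j => rfl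
  calc (∑ j : Fin t.card, F ((t.equivFin.symm ⟨(j : ℕ), j.isLt⟩ : t) : α))
      = ∑ j : Fin t.card, F ((t.equivFin.symm j : t) : α) := by
        refine Finset.sum_congr rfl fun j _ => by rw [this j]
    _ = ∑ i : t, F (i : α) := Equiv.sum_comp t.equivFin.symm (fun i : t => F (i : α))
    _ = ∑ i ∈ t, F i := Finset.sum_coe_sort t F

/-- The linear functional `(v, q) ↦ ∑ₓ q x` on `ℝ^n × ℝ^X`. -/
def LL (n : ℕ) (X : Type*) [Fintype X] : EE n X →ₗ[ℝ] ℝ where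
  toFun p := ∑ x, p.2 x
  map_add' a b := by simp [Finset.sum_add_distrib]
  map_smul' c a := by simp [Finset.mul_sum]

lemma LL_gmap (V : Fin n → stdSimplex ℝ X → ℝ) (ν : stdSimplex ℝ X) :
    LL n X (gmap V ν) = 1 := ν.2.2

lemma finrank_ker_LL :
    Module.finrank ℝ (LinearMap.ker (LL n X)) + 1 = n + Fintype.card X := by
  have hsurj : LinearMap.range (LL n X) = ⊤ := by
    rw [LinearMap.range_eq_top]
    intro c
    classical
    obtain ⟨x0⟩ := ‹Nonempty X›
    refine ⟨(0, Pi.single x0 c), ?_⟩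
    simp [LL, Finset.sum_pi_single]
  have h := (LL n X).finrank_range_add_finrank_ker
  rw [hsurj, finrank_top] at h
  have hE : Module.finrank ℝ (EE n X) = n + Fintype.card X := by
    rw [Module.finrank_prod, Module.finrank_pi, Module.finrank_pi, Fintype.card_fin]
  rw [hE, Module.finrank_self] at h
  omega

lemma card_bound (V : Fin n → stdSimplex ℝ X → ℝ) (t : Finset (EE n X))
    (ht : ↑t ⊆ Set.range (gmap V))
    (hai : AffineIndependent ℝ ((↑) : t → EE n X)) : t.card ≤ n + Fintype.card X := by
  have h1 : Fintype.card t ≤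
      Module.finrank ℝ (vectorSpan ℝ (Set.range ((↑) : t → EE n X))) + 1 :=
    hai.card_le_finrank_succ
  have hsub : vectorSpan ℝ (Set.range ((↑) : t → EE n X)) ≤ LinearMap.ker (LL n X) := by
    rw [vectorSpan_def, Submodule.span_le]
    rintro v hv
    rw [Set.mem_vsub] at hv
    obtain ⟨a, ha, b, hb, rfl⟩ := hv
    rw [Subtype.range_coe_subtype] at ha hb
    obtain ⟨νa, rfl⟩ := ht ha
    obtain ⟨νb, rfl⟩ := ht hb
    rw [SetLike.mem_coe, LinearMap.mem_ker, vsub_eq_sub, map_sub, LL_gmap, LL_gmap, sub_self]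
  have h2 := Submodule.finrank_mono hsub
  rw [Fintype.card_coe] at h1
  calc t.card ≤ Module.finrank ℝ (vectorSpan ℝ (Set.range ((↑) : t → EE n X))) + 1 := h1
    _ ≤ Module.finrank ℝ (LinearMap.ker (LL n X)) + 1 := Nat.add_le_add_right h2 1
    _ = n + Fintype.card X := finrank_ker_LL

/-- Refined Carathéodory: every point in the convex hull of the curve `gmap V` is a
convex combination of `(n+1)·|X|` points on the curve. -/
lemma rep (V : Fin n → stdSimplex ℝ X → ℝ) (ν₀ : stdSimplex ℝ X) {q : EE n X}
    (hq : q ∈ convexHull ℝ (Set.range (gmap V))) :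
    ∃ (p : Fin ((n + 1) * Fintype.card X) → ℝ)
      (z : Fin ((n + 1) * Fintype.card X) → stdSimplex ℝ X),
      (∀ j, 0 ≤ p j) ∧ (∑ j, p j = 1) ∧ (∑ j, p j • gmap V (z j)) = q := by
  rw [convexHull_eq_union] at hq
  simp only [Set.mem_iUnion] at hq
  obtain ⟨t, ht, hai, hqt⟩ := hq
  have hcard : t.card ≤ (n + 1) * Fintype.card X := by
    have h1 := card_bound V t ht hai
    have h2 : 1 ≤ Fintype.card X := Fintype.card_pos
    calc t.card ≤ n + Fintype.card X := h1
      _ ≤ n * Fintype.card X + Fintype.card X := by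
          have : n ≤ n * Fintype.card X := Nat.le_mul_of_pos_right n (by omega)
          omega
      _ = (n + 1) * Fintype.card X := by ring
  rw [Finset.convexHull_eq] at hqt
  obtain ⟨w, hw0, hw1, hwq⟩ := hqt
  rw [t.centerMass_eq_of_sum_1 id hw1] at hwq
  have hch : ∀ i : t, ∃ ν : stdSimplex ℝ X, gmap V ν = (i : EE n X) := fun i => ht i.2
  choose ch hch' using hch
  refine ⟨fun j => if h : (j : ℕ) < t.card
      then w ((t.equivFin.symm ⟨(j : ℕ), h⟩ : t) : EE n X) else 0,
    fun j => if h : (j : ℕ) < t.card then ch (t.equivFin.symm ⟨(j : ℕ), h⟩) else ν₀, ?_, ?_, ?_⟩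
  · intro j
    dsimp only
    split
    · exact hw0 _ (Finset.coe_mem _)
    · exact le_rfl
  · exact (pad_sum t hcard w).trans hw1
  · have key : ∀ j : Fin ((n + 1) * Fintype.card X),
        ((if h : (j : ℕ) < t.card
          then w ((t.equivFin.symm ⟨(j : ℕ), h⟩ : t) : EE n X) else 0) •
        gmap V (if h : (j : ℕ) < t.card then ch (t.equivFin.symm ⟨(j : ℕ), h⟩) else ν₀))
        = if h : (j : ℕ) < t.card
          then w ((t.equivFin.symm ⟨(j : ℕ), h⟩ : t) : EE n X) •
            id ((t.equivFin.symm ⟨(j : ℕ), h⟩ : t) : EE n X) else 0 := by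
      intro j
      by_cases h : (j : ℕ) < t.card
      · rw [dif_pos h, dif_pos h, dif_pos h, hch']
        rfl
      · rw [dif_neg h, dif_neg h, dif_neg h, zero_smul]
    exact (Finset.sum_congr rfl (fun j _ => key j)).trans
      ((pad_sum t hcard (fun i => w i • id i)).trans hwq)

lemma sum_mem_hull (V : Fin n → stdSimplex ℝ X → ℝ) {m : ℕ} (p : Fin m → ℝ)
    (z : Fin m → stdSimplex ℝ X) (hp : ∀ j, 0 ≤ p j) (hs : ∑ j, p j = 1) :
    (∑ j, p j • gmap V (z j)) ∈ convexHull ℝ (Set.range (gmap V)) := by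
  have h := Finset.centerMass_mem_convexHull (t := (Finset.univ : Finset (Fin m)))
    (w := p) (z := fun j => gmap V (z j)) (s := Set.range (gmap V)) (fun i _ => hp i)
    (by rw [hs]; norm_num) (fun i _ => ⟨z i, rfl⟩)
  rwa [Finset.centerMass_eq_of_sum_1 _ _ hs] at h

/-- The compact set of values achievable with `(n+1)·|X|`-supported measures. -/
def HSet (V : Fin n → stdSimplex ℝ X → ℝ) : Set (EE n X) :=
  (fun pz : (Fin ((n + 1) * Fintype.card X) → ℝ) ×
      (Fin ((n + 1) * Fintype.card X) → stdSimplex ℝ X) =>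
    ∑ j, pz.1 j • gmap V (pz.2 j)) ''
    ((stdSimplex ℝ (Fin ((n + 1) * Fintype.card X))) ×ˢ (Set.univ))

lemma HSet_eq (V : Fin n → stdSimplex ℝ X → ℝ) (ν₀ : stdSimplex ℝ X) :
    HSet V = convexHull ℝ (Set.range (gmap V)) := by
  ext q
  constructor
  · rintro ⟨⟨p, z⟩, ⟨hp, -⟩, rfl⟩
    exact sum_mem_hull V p z hp.1 hp.2
  · intro hq
    obtain ⟨p, z, h0, h1, h2⟩ := rep V ν₀ hq
    exact ⟨(p, z), ⟨⟨h0, h1⟩, trivial⟩, h2⟩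

lemma HSet_compact {V : Fin n → stdSimplex ℝ X → ℝ} (hV : ∀ i, Continuous (V i)) :
    IsCompact (HSet V) := by
  apply IsCompact.image
  · exact (isCompact_stdSimplex _ _).prod isCompact_univ
  · refine continuous_finset_sum _ fun j _ => Continuous.fun_smul ?_ ?_
    · exact (continuous_apply j).comp continuous_fst
    · exact (cont_gmap hV).comp ((continuous_apply j).comp continuous_snd)

lemma integral_mem_hull {V : Fin n → stdSimplex ℝ X → ℝ} (hV : ∀ i, Continuous (V i))
    (ν₀ : stdSimplex ℝ X) (P : ProbabilityMeasure (stdSimplex ℝ X)) :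
    ((fun i => expct P (V i), fun x => expct P (fun ν => (ν : X → ℝ) x)) : EE n X) ∈ HSet V := by
  have hint : Integrable (gmap V) (P : Measure (stdSimplex ℝ X)) :=
    integrable_cont _ (cont_gmap hV)
  have hmem : (∫ ν, gmap V ν ∂(P : Measure (stdSimplex ℝ X))) ∈ HSet V := by
    refine Convex.integral_mem ?_ ((HSet_compact hV).isClosed) ?_ hint
    · rw [HSet_eq V ν₀]; exact convex_convexHull ℝ _
    · filter_upwards with ν
      rw [HSet_eq V ν₀]
      exact subset_convexHull ℝ _ ⟨ν, rfl⟩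
  have h1 : ∀ i, (∫ ν, gmap V ν ∂(P : Measure (stdSimplex ℝ X))).1 i = expct P (V i) := by
    intro i
    have := ((ContinuousLinearMap.proj i).comp
      (ContinuousLinearMap.fst ℝ (Fin n → ℝ) (X → ℝ))).integral_comp_comm hint
    exact this.symm
  have h2 : ∀ x, (∫ ν, gmap V ν ∂(P : Measure (stdSimplex ℝ X))).2 x
      = expct P (fun ν => (ν : X → ℝ) x) := by
    intro x
    have := ((ContinuousLinearMap.proj x).comp
      (ContinuousLinearMap.snd ℝ (Fin n → ℝ) (X → ℝ))).integral_comp_comm hint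
    exact this.symm
  have : ((fun i => expct P (V i), fun x => expct P (fun ν => (ν : X → ℝ) x)) : EE n X)
      = ∫ ν, gmap V ν ∂(P : Measure (stdSimplex ℝ X)) := by
    refine Prod.ext ?_ ?_
    · exact funext fun i => (h1 i).symm
    · exact funext fun x => (h2 x).symm
  rw [this]
  exact hmem

end Stmt10Aux

open Stmt10Aux in
/-- for continuous `f`, closed `D(μ) ⊆ ℝ^n` with `𝒱(μ) ∩ D(μ) ≠ ∅`, the
supremum of `f(E_P[V^1], …, E_P[V^n])` over all `P ∈ Δ²(X)` with barycenter `μ` and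
`(E_P[V^i])_i ∈ D(μ)` is attained by some `P*` with support of size at most `(n+1)·|X|`. -/
theorem statement_10 {X : Type*} [Fintype X] [Nonempty X] {n : ℕ}
    (V : Fin n → stdSimplex ℝ X → ℝ) (hV : ∀ i, Continuous (V i))
    (μ : stdSimplex ℝ X)
    (f : (Fin n → ℝ) → ℝ) (hf : Continuous f)
    (D : Set (Fin n → ℝ)) (hD : IsClosed D)
    (hne : (VSet V μ ∩ D).Nonempty) :
    ∃ P : ProbabilityMeasure (stdSimplex ℝ X),
      isBary P μ ∧ (fun i => expct P (V i)) ∈ D ∧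
      finSupp P ((n + 1) * Fintype.card X) ∧
      ∀ Q : ProbabilityMeasure (stdSimplex ℝ X),
        isBary Q μ → (fun i => expct Q (V i)) ∈ D →
        f (fun i => expct Q (V i)) ≤ f (fun i => expct P (V i)) := by
  classical
  set Φ : Set (Fin n → ℝ) := {v | ((v, (μ : X → ℝ)) : EE n X) ∈ HSet V} with hΦ
  -- from a finitely supported representation, read off `expct` values
  have fromRep : ∀ (p : Fin ((n + 1) * Fintype.card X) → ℝ)
      (z : Fin ((n + 1) * Fintype.card X) → stdSimplex ℝ X)
      (_ : ∀ j, 0 ≤ p j) (_ : ∑ j, p j = 1) (v : Fin n → ℝ)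
      (_ : (∑ j, p j • gmap V (z j)) = ((v, (μ : X → ℝ)) : EE n X)),
      ∃ P : ProbabilityMeasure (stdSimplex ℝ X),
        isBary P μ ∧ (∀ i, expct P (V i) = v i) ∧
        (P : Measure (stdSimplex ℝ X)) = ∑ j, ENNReal.ofReal (p j) • Measure.dirac (z j) := by
    intro p z hp0 hp1 v hsum
    obtain ⟨P, hPm, hPe⟩ := build_measure p z hp0 hp1
    refine ⟨P, ?_, ?_, hPm⟩
    · intro x
      rw [hPe (fun ν => (ν : X → ℝ) x)
        (by exact (continuous_apply x).comp continuous_subtype_val)]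
      have h := congrArg (fun q : EE n X => q.2 x) hsum
      simpa [gmap, Prod.snd_sum, Finset.sum_apply, Prod.smul_snd, smul_eq_mul] using h
    · intro i
      rw [hPe _ (hV i)]
      have h := congrArg (fun q : EE n X => q.1 i) hsum
      simpa [gmap, Prod.fst_sum, Finset.sum_apply, Prod.smul_fst, smul_eq_mul] using h
  have hVΦ : VSet V μ = Φ := by
    ext v
    constructor
    · rintro ⟨P, hB, hv⟩
      have h := integral_mem_hull hV μ P
      have he : ((fun i => expct P (V i), fun x => expct P (fun ν => (ν : X → ℝ) x)) : EE n X)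
          = ((v, (μ : X → ℝ)) : EE n X) := by
        refine Prod.ext (funext fun i => hv i) (funext fun x => hB x)
      rw [he] at h
      exact h
    · rintro (⟨⟨p, z⟩, ⟨hpz, -⟩, hsum⟩ : _ ∈ HSet V)
      obtain ⟨P, hB, hv, -⟩ := fromRep p z hpz.1 hpz.2 v hsum
      exact ⟨P, hB, hv⟩
  have hΦclosed : IsClosed Φ := by
    have : Φ = (fun v : Fin n → ℝ => ((v, (μ : X → ℝ)) : EE n X)) ⁻¹' HSet V := rfl
    rw [this]
    exact (HSet_compact hV).isClosed.preimage (Continuous.prodMk continuous_id continuous_const)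
  have hΦcompact : IsCompact Φ := by
    refine IsCompact.of_isClosed_subset ((HSet_compact hV).image continuous_fst) hΦclosed ?_
    intro v hv
    exact ⟨((v, (μ : X → ℝ)) : EE n X), hv, rfl⟩
  have hmax := (hΦcompact.inter_right hD).exists_isMaxOn (hVΦ ▸ hne) hf.continuousOn
  obtain ⟨vstar, ⟨hvΦ, hvD⟩, hvmax⟩ := hmax
  obtain ⟨⟨p, z⟩, ⟨hpz, -⟩, hsum⟩ := hvΦ
  obtain ⟨P, hB, hv, hPm⟩ := fromRep p z hpz.1 hpz.2 vstar hsum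
  have hvfun : (fun i => expct P (V i)) = vstar := funext hv
  refine ⟨P, hB, ?_, ⟨p, z, hpz.1, hpz.2, hPm⟩, ?_⟩
  · rw [hvfun]; exact hvD
  · intro Q hQb hQD
    have hQΦ : (fun i => expct Q (V i)) ∈ Φ := by
      rw [← hVΦ]; exact ⟨Q, hQb, fun i => rfl⟩
    have := hvmax ⟨hQΦ, hQD⟩
    rw [hvfun]
    exact this
end
end
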